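/- arXiv:0810.5488 — 12 statements merged into one kernel-verified Lean document; each statement's English description precedes it below -/
import Mathlib

section
/- Let Ω : ℝ → Matrix (Fin n) (Fin n) ℂ and suppose Ω has derivative D at the point t (HasDerivAt Ω D t). Then the map s ↦ exp(Ω s) has derivative at t equal to (∑'_{k≥0} (1/(k+1)!) • ad_{Ω t}^k D) * exp(Ω t), where the sum is over all natural numbers k. -/
/-!
The Duhamel formula `exp A - exp B = ∫₀¹ exp (u • A) * (A - B) * exp ((1 - u) • B) du` writes
`exp A - exp W` as a bounded operator, depending continuously on `A`, applied to `A - W`. Hence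
the derivative of `exp` at `W` is `X ↦ ∫₀¹ exp (u • W) * X * exp ((1 - u) • W) du`. Since
`exp (u • W) * X * exp (-(u • W)) = exp (u • ad_W) X`, integrating the exponential series of
`u • ad_W` termwise over `[0, 1]` turns this into `(∑ ad_W^k X / (k + 1)!) * exp W`.
-/

open NormedSpace ContinuousLinearMap
open scoped Nat

open Asymptotics Filter Topology in
theorem hasFDerivAt_of_sub_eq_apply_sub {𝕜 E F : Type*} [NontriviallyNormedField 𝕜]
    [NormedAddCommGroup E] [NormedSpace 𝕜 E] [NormedAddCommGroup F] [NormedSpace 𝕜 F]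
    {f : E → F} {Φ : E → E →L[𝕜] F} {x : E}
    (hf : ∀ y, f y - f x = Φ y (y - x)) (hΦ : ContinuousAt Φ x) : HasFDerivAt f (Φ x) x := by
  refine .of_isLittleO ?_
  have hsmall : (fun y => ‖Φ y - Φ x‖) =o[𝓝 x] (fun _ => (1 : ℝ)) :=
    ((isLittleO_one_iff ℝ).2 (by simpa using hΦ.sub_const (Φ x))).norm_left
  have hbound : (fun y => f y - f x - Φ x (y - x)) =O[𝓝 x] (fun y => ‖Φ y - Φ x‖ * ‖y - x‖) :=
    isBigO_of_le _ fun y => by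
      simpa [hf, ← sub_apply] using (Φ y - Φ x).le_opNorm (y - x)
  simpa using hbound.trans_isLittleO (hsmall.mul_isBigO (isBigO_refl _ _).norm_right)

section Multiplication

variable {𝔸 : Type*} [NormedRing 𝔸] [NormedAlgebra ℝ 𝔸]

noncomputable def adCLM (W : 𝔸) : 𝔸 →L[ℝ] 𝔸 := mul ℝ 𝔸 W - (mul ℝ 𝔸).flip W

theorem adCLM_smul (c : ℝ) (W : 𝔸) : adCLM (c • W) = c • adCLM W := by
  ext X; simp [adCLM, smul_sub]

theorem coe_adCLM (W : 𝔸) : ⇑(adCLM W) = fun X => W * X - X * W := by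
  ext X; simp [adCLM]

noncomputable def mulLeftRingHom : 𝔸 →+* (𝔸 →L[ℝ] 𝔸) where
  toFun := mul ℝ 𝔸
  map_one' := by ext; simp
  map_mul' _ _ := by ext; simp [mul_assoc]
  map_zero' := by ext; simp
  map_add' _ _ := by ext; simp

noncomputable def mulRightRingHom : 𝔸ᵐᵒᵖ →+* (𝔸 →L[ℝ] 𝔸) where
  toFun a := (mul ℝ 𝔸).flip a.unop
  map_one' := by ext; simp
  map_mul' _ _ := by ext; simp [mul_assoc]
  map_zero' := by ext; simp
  map_add' _ _ := by ext; simp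

end Multiplication

section Exponential

variable {𝔸 : Type*} [NormedRing 𝔸] [NormedAlgebra ℝ 𝔸] [CompleteSpace 𝔸]

-- The lemmas on `exp` in noncommutative algebras are stated for normed `ℚ`-algebras.
noncomputable local instance : NormedAlgebra ℚ 𝔸 := NormedAlgebra.restrictScalars ℚ ℝ 𝔸

theorem hasDerivAt_exp_smul_mul_exp_one_sub_smul (A B : 𝔸) (u : ℝ) :
    HasDerivAt (fun v : ℝ => exp (v • A) * exp ((1 - v) • B))
      (exp (u • A) * (A - B) * exp ((1 - u) • B)) u := by
  have hB : HasDerivAt (fun v : ℝ => exp ((1 - v) • B)) (-(B * exp ((1 - u) • B))) u := by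
    simpa [Function.comp_def] using
      (hasDerivAt_exp_smul_const' B (1 - u)).scomp u ((hasDerivAt_id u).const_sub 1)
  exact ((hasDerivAt_exp_smul_const A u).mul hB).congr_deriv (by noncomm_ring)

theorem exp_sub_exp_eq_integral (A B : 𝔸) :
    exp A - exp B = ∫ u in (0 : ℝ)..1, exp (u • A) * (A - B) * exp ((1 - u) • B) := by
  rw [intervalIntegral.integral_eq_sub_of_hasDerivAt
    (fun u _ => hasDerivAt_exp_smul_mul_exp_one_sub_smul A B u)
    ((by fun_prop : Continuous _).intervalIntegrable _ _)]
  simp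

noncomputable def duhamelOp (A B : 𝔸) : 𝔸 →L[ℝ] 𝔸 :=
  ∫ u in (0 : ℝ)..1, mulLeftRight ℝ 𝔸 (exp (u • A)) (exp ((1 - u) • B))

theorem duhamelOp_apply (A B X : 𝔸) :
    duhamelOp A B X = ∫ u in (0 : ℝ)..1, exp (u • A) * X * exp ((1 - u) • B) := by
  rw [duhamelOp, intervalIntegral_apply ((by fun_prop : Continuous _).intervalIntegrable _ _)]
  simp

theorem exp_sub_exp_eq_duhamelOp_apply (A B : 𝔸) : exp A - exp B = duhamelOp A B (A - B) := by
  rw [duhamelOp_apply, exp_sub_exp_eq_integral]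

theorem continuous_duhamelOp_left (B : 𝔸) : Continuous fun A : 𝔸 => duhamelOp A B :=
  intervalIntegral.continuous_parametric_intervalIntegral_of_continuous' (by fun_prop) 0 1

theorem hasFDerivAt_exp_duhamelOp (W : 𝔸) : HasFDerivAt exp (duhamelOp W W) W :=
  hasFDerivAt_of_sub_eq_apply_sub (Φ := fun A => duhamelOp A W)
    (fun A => exp_sub_exp_eq_duhamelOp_apply A W) (continuous_duhamelOp_left W).continuousAt

theorem exp_adCLM_apply (W X : 𝔸) : exp (adCLM W) X = exp W * X * exp (-W) := by
  have hL : exp (mul ℝ 𝔸 W) = mul ℝ 𝔸 (exp W) :=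
    (map_exp mulLeftRingHom (mul ℝ 𝔸).continuous W).symm
  have hR : exp (-(mul ℝ 𝔸).flip W) = (mul ℝ 𝔸).flip (exp (-W)) := by
    have := map_exp mulRightRingHom
      ((mul ℝ 𝔸).flip.continuous.comp MulOpposite.continuous_unop) (MulOpposite.op (-W))
    rw [exp_op] at this
    simpa [mulRightRingHom] using this.symm
  have hcomm : Commute (mul ℝ 𝔸 W) (-(mul ℝ 𝔸).flip W) :=
    Commute.neg_right <| ext fun Y => by simp [mul_assoc]
  rw [adCLM, sub_eq_add_neg, exp_add_of_commute hcomm, hL, hR]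
  simp [mul_assoc]

theorem hasSum_integral_exp_smul (A : 𝔸) :
    HasSum (fun k : ℕ => ((1 : ℝ) / (k + 1)!) • A ^ k) (∫ u in (0 : ℝ)..1, exp (u • A)) := by
  have hterm (k : ℕ) :
      ∫ u in (0 : ℝ)..1, (k ! : ℝ)⁻¹ • (u • A) ^ k = ((1 : ℝ) / (k + 1)!) • A ^ k := by
    simp only [smul_pow, smul_smul, mul_comm _ (_ ^ k)]
    rw [intervalIntegral.integral_smul_const, intervalIntegral.integral_mul_const, integral_pow,
      Nat.factorial_succ]
    congr 1
    push_cast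
    field_simp
    simp
  have hbound (k : ℕ) (u : ℝ) (hu : u ∈ Set.uIoc (0 : ℝ) 1) :
      ‖(k ! : ℝ)⁻¹ • (u • A) ^ k‖ ≤ ‖(k ! : ℝ)⁻¹ • A ^ k‖ := by
    rw [Set.uIoc_of_le zero_le_one] at hu
    rw [smul_pow, smul_comm, norm_smul, Real.norm_of_nonneg (pow_nonneg hu.1.le k)]
    exact mul_le_of_le_one_left (norm_nonneg _) (pow_le_one₀ hu.1.le hu.2)
  simpa only [hterm] using
    intervalIntegral.hasSum_integral_of_dominated_convergence (μ := MeasureTheory.volume)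
      (fun k _ => ‖(k ! : ℝ)⁻¹ • A ^ k‖) (fun k => by fun_prop)
      (fun k => .of_forall (hbound k)) (.of_forall fun _ _ => norm_expSeries_summable' A)
      intervalIntegrable_const (.of_forall fun u _ => exp_series_hasSum_exp' (u • A))

theorem exp_smul_mul_mul_exp_one_sub_smul (W X : 𝔸) (u : ℝ) :
    exp (u • W) * X * exp ((1 - u) • W) = exp (u • adCLM W) X * exp W := by
  have hsplit : (1 - u) • W = -(u • W) + W := by rw [sub_smul, one_smul, neg_add_eq_sub]
  rw [← adCLM_smul, exp_adCLM_apply, hsplit,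
    exp_add_of_commute ((Commute.refl W).smul_left u).neg_left, mul_assoc _ (exp _)]

theorem duhamelOp_self_apply (W D : 𝔸) :
    duhamelOp W W D =
      (∑' k : ℕ, ((1 : ℝ) / (k + 1)!) • (fun X => W * X - X * W)^[k] D) * exp W := by
  have hsum : HasSum (fun k : ℕ => ((1 : ℝ) / (k + 1)!) • (fun X => W * X - X * W)^[k] D)
      ((∫ u in (0 : ℝ)..1, exp (u • adCLM W)) D) := by
    simpa [pow_apply_eq_iterate, coe_adCLM] using
      (hasSum_integral_exp_smul (adCLM W)).mapL (apply ℝ 𝔸 D)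
  rw [hsum.tsum_eq, duhamelOp_apply, intervalIntegral_apply
    ((by fun_prop : Continuous _).intervalIntegrable _ _)]
  simp_rw [exp_smul_mul_mul_exp_one_sub_smul]
  exact ((mul ℝ 𝔸).flip (exp W)).intervalIntegral_comp_comm
    ((by fun_prop : Continuous _).intervalIntegrable _ _)

end Exponential

open scoped Matrix.Norms.L2Operator

/-- The derivative of the matrix exponential along a path: if `Ω` has derivative `D` at `t`,
then `s ↦ exp (Ω s)` has derivative `(∑' k, (1/(k+1)!) • ad_{Ω t}^k D) * exp (Ω t)` at `t`. -/
theorem exp_hasDerivAt_dexp {n : ℕ} (Ω : ℝ → Matrix (Fin n) (Fin n) ℂ)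
    (D : Matrix (Fin n) (Fin n) ℂ) (t : ℝ) (hΩ : HasDerivAt Ω D t) :
    HasDerivAt (fun s : ℝ => NormedSpace.exp (Ω s))
      ((∑' k : ℕ, ((1 : ℝ) / (Nat.factorial (k + 1))) •
          (fun X : Matrix (Fin n) (Fin n) ℂ => Ω t * X - X * Ω t)^[k] D) *
        NormedSpace.exp (Ω t)) t := by
  rw [← duhamelOp_self_apply]
  exact (hasFDerivAt_exp_duhamelOp (Ω t)).comp_hasDerivAt t hΩ
end

section
/- Let Ω be an n×n complex matrix with ‖Ω‖ < π in the ℓ² operator (spectral) norm. Then for every n×n complex matrix C, the series ∑_{k≥0} ((B_k : ℝ)/k!) • ad_Ω^k C is absolutely summable, i.e. the family of norms k ↦ ‖((B_k)/k!) • ad_Ω^k C‖ is summable. -/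
/-!
Since `‖ad_Ω‖ ≤ 2‖Ω‖`, the `k`-th term has norm at most `|B_k| / k! · (2‖Ω‖)^k ‖C‖`.
Euler's formula `ζ(2m) = (-1)^(m+1) (2π)^(2m) B_{2m} / (2 (2m)!)` and `ζ(2m) ≤ ζ(2) = π²/6`
give `|B_k| / k! ≤ 4 / (2π)^k` for every `k` (the odd Bernoulli numbers past `B₁` vanish),
so the series is dominated by a geometric series of ratio `‖Ω‖ / π < 1`.
-/

open scoped Matrix.Norms.L2Operator

open Real Nat

theorem abs_bernoulli_two_mul_div_factorial_le {m : ℕ} (hm : m ≠ 0) :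
    |(bernoulli (2 * m) : ℝ)| / (2 * m)! ≤ π ^ 2 / 3 / (2 * π) ^ (2 * m) := by
  have hterm (i : ℕ) : 1 / (i : ℝ) ^ (2 * m) ≤ 1 / (i : ℝ) ^ 2 := by
    rcases i.eq_zero_or_pos with rfl | hi
    · simp [hm]
    · exact one_div_pow_le_one_div_pow_of_le (by exact_mod_cast hi) (by omega)
  have hζ := hasSum_zeta_nat hm
  have hζ_le := hasSum_le hterm hζ hasSum_zeta_two
  have hζ_nonneg := hζ.nonneg fun i => by positivity
  have h2 : (2 : ℝ) ^ (2 * m - 1) * 2 = 2 ^ (2 * m) := by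
    rw [← pow_succ, Nat.sub_add_cancel (by omega)]
  rw [← abs_of_nonneg hζ_nonneg, abs_div, abs_mul, abs_mul, abs_mul, abs_pow, abs_neg, abs_one,
    one_pow, one_mul, abs_of_pos (by positivity : (0 : ℝ) < 2 ^ (2 * m - 1)),
    abs_of_pos (by positivity : (0 : ℝ) < π ^ (2 * m)), Nat.abs_cast] at hζ_le
  rw [le_div_iff₀ (by positivity), mul_pow, ← h2]
  calc _ = 2 * (2 ^ (2 * m - 1) * π ^ (2 * m) * |(bernoulli (2 * m) : ℝ)| / (2 * m)!) := by
        ring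
    _ ≤ 2 * (π ^ 2 / 6) := by gcongr
    _ = _ := by ring

theorem abs_bernoulli_div_factorial_le (k : ℕ) :
    |(bernoulli k : ℝ)| / k ! ≤ 4 / (2 * π) ^ k := by
  obtain ⟨m, rfl | rfl⟩ := k.even_or_odd'
  · rcases eq_or_ne m 0 with rfl | hm
    · norm_num
    · refine (abs_bernoulli_two_mul_div_factorial_le hm).trans ?_
      gcongr
      nlinarith [pi_lt_d2, pi_pos]
  · rcases eq_or_ne m 0 with rfl | hm
    · rw [bernoulli_one, div_le_div_iff₀ (by positivity) (by positivity)]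
      norm_num
      linarith [pi_lt_four]
    · rw [bernoulli_eq_zero_of_odd (odd_two_mul_add_one m) (by omega)]
      simp only [Rat.cast_zero, abs_zero, zero_div]
      positivity

theorem summable_norm_bernoulli_div_factorial_smul {E : Type*} [SeminormedAddCommGroup E]
    [NormedSpace ℝ E] {v : ℕ → E} {M r : ℝ} (hr₀ : 0 ≤ r) (hr : r < 2 * π)
    (hv : ∀ k, ‖v k‖ ≤ M * r ^ k) :
    Summable fun k => ‖((bernoulli k : ℝ) / k !) • v k‖ := by
  have hq : r / (2 * π) < 1 := (div_lt_one (by positivity)).mpr hr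
  refine .of_nonneg_of_le (fun _ => norm_nonneg _) (fun k => ?_)
    ((summable_geometric_of_lt_one (by positivity) hq).mul_left (4 * M))
  rw [norm_smul, Real.norm_eq_abs, abs_div, Nat.abs_cast]
  have hM : 0 ≤ M := by simpa using (norm_nonneg _).trans (hv 0)
  calc _ ≤ 4 / (2 * π) ^ k * (M * r ^ k) :=
        mul_le_mul (abs_bernoulli_div_factorial_le k) (hv k) (norm_nonneg _) (by positivity)
    _ = 4 * M * (r / (2 * π)) ^ k := by rw [div_pow]; field_simp

theorem norm_iterate_commutator_le {R : Type*} [NonUnitalSeminormedRing R] (a x : R) (k : ℕ) :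
    ‖(fun y => a * y - y * a)^[k] x‖ ≤ ‖x‖ * (2 * ‖a‖) ^ k := by
  induction k with
  | zero => simp
  | succ k ih =>
    rw [Function.iterate_succ_apply', pow_succ, ← mul_assoc]
    set y := (fun y => a * y - y * a)^[k] x
    calc ‖a * y - y * a‖ ≤ ‖a‖ * ‖y‖ + ‖y‖ * ‖a‖ :=
          (norm_sub_le _ _).trans (add_le_add (norm_mul_le _ _) (norm_mul_le _ _))
      _ = ‖y‖ * (2 * ‖a‖) := by ring
      _ ≤ _ := by gcongr

/-- If `‖Ω‖ < π` (ℓ² operator norm), then the series `∑ (B_k/k!) • ad_Ω^k C` defining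
`d exp_Ω⁻¹ C` is absolutely summable. -/
theorem dexpinv_abs_summable {n : ℕ} (Ω : Matrix (Fin n) (Fin n) ℂ) (hΩ : ‖Ω‖ < Real.pi)
    (C : Matrix (Fin n) (Fin n) ℂ) :
    Summable (fun k : ℕ => ‖(((bernoulli k : ℚ) : ℝ) / (Nat.factorial k)) •
      (fun X : Matrix (Fin n) (Fin n) ℂ => Ω * X - X * Ω)^[k] C‖) :=
  summable_norm_bernoulli_div_factorial_smul (by positivity) (by linarith)
    (norm_iterate_commutator_le Ω C)
end

section
/- Let Ω be an n×n complex matrix. A complex number μ is an eigenvalue of the linear endomorphism ad_Ω of the space of n×n complex matrices if and only if μ = λ₁ − λ₂ for some eigenvalues λ₁, λ₂ of Ω. (In particular, if Ω has eigenvalues λ₁,…,λ_n, then ad_Ω has eigenvalues λ_j − λ_k.) -/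
/-!
If `Ω X - X Ω = μ X` with `X ≠ 0`, then `X (Ω + μ) = Ω X`, so `X p(Ω + μ) = p(Ω) X` for every
polynomial `p`; taking `p = χ_Ω` gives `X χ_Ω(Ω + μ) = 0`, so `χ_Ω(Ω + μ)` is singular and by the
spectral mapping theorem `χ_Ω(ν) = 0` for some eigenvalue `ν` of `Ω + μ`, i.e. `μ = ν - (ν - μ)`.
Conversely, if `Ω v = λ₁ v` and `wᵀ Ω = λ₂ wᵀ`, then `v wᵀ` is an eigenvector of `ad_Ω` for
`λ₁ - λ₂`.
-/

open Polynomial Matrix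

theorem SemiconjBy.aeval {R A : Type*} [CommSemiring R] [Semiring A] [Algebra R A] {x a b : A}
    (h : SemiconjBy x a b) (p : R[X]) : SemiconjBy x (aeval a p) (aeval b p) := by
  induction p using Polynomial.induction_on' with
  | add p q hp hq => simpa only [map_add] using hp.add_right hq
  | monomial k c =>
    simpa only [aeval_monomial] using
      SemiconjBy.mul_right (Algebra.commutes c x).symm (h.pow_right k)

theorem exists_isRoot_sub_mem_spectrum_of_mul_sub_mul_eq_smul {𝕜 A : Type*} [Field 𝕜]
    [IsAlgClosed 𝕜] [Ring A] [Algebra 𝕜 A] {a x : A} {μ : 𝕜} (hx : x ≠ 0)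
    (h : a * x - x * a = μ • x) {p : 𝕜[X]} (hp : p ≠ 0) (hpa : aeval a p = 0) :
    ∃ ν, p.IsRoot ν ∧ ν - μ ∈ spectrum 𝕜 a := by
  have : Nontrivial A := ⟨⟨x, 0, hx⟩⟩
  have hsemiconj : SemiconjBy x (algebraMap 𝕜 A μ + a) a := by
    rw [SemiconjBy, mul_add, ← Algebra.commutes, ← Algebra.smul_def, ← h, sub_add_cancel]
  have hsingular : ¬IsUnit (aeval (algebraMap 𝕜 A μ + a) p) := fun hunit =>
    hx <| hunit.mul_left_eq_zero.mp <| by rw [(hsemiconj.aeval p).eq, hpa, zero_mul]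
  have hdeg : 0 < p.degree := degree_pos_of_aeval_root hp hpa fun r hr =>
    (algebraMap 𝕜 A).injective (hr.trans (map_zero _).symm)
  obtain ⟨ν, hν, hνp⟩ : (0 : 𝕜) ∈ (eval · p) '' spectrum 𝕜 (algebraMap 𝕜 A μ + a) := by
    rwa [← spectrum.map_polynomial_aeval_of_degree_pos _ _ hdeg, spectrum.zero_mem_iff]
  refine ⟨ν, hνp, (spectrum.add_mem_add_iff (s := μ)).mp ?_⟩
  rwa [sub_add_cancel]

section Eigenvectors

variable {R n : Type*} [CommRing R] [IsDomain R] [Fintype n] [DecidableEq n] {A : Matrix n n R}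
  {r : R}

theorem Matrix.exists_mulVec_eq_smul_of_isRoot_charpoly (h : A.charpoly.IsRoot r) :
    ∃ v ≠ 0, A *ᵥ v = r • v := by
  rw [← charpoly_toLin', ← Module.End.hasEigenvalue_iff_isRoot_charpoly] at h
  obtain ⟨v, hv, hv0⟩ := h.exists_hasEigenvector
  exact ⟨v, hv0, by simpa only [toLin'_apply] using Module.End.mem_eigenspace_iff.mp hv⟩

theorem Matrix.exists_vecMul_eq_smul_of_isRoot_charpoly (h : A.charpoly.IsRoot r) :
    ∃ w ≠ 0, w ᵥ* A = r • w := by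
  rw [← charpoly_transpose] at h
  simpa only [mulVec_transpose] using exists_mulVec_eq_smul_of_isRoot_charpoly h

end Eigenvectors

theorem Matrix.mul_vecMulVec_sub_vecMulVec_mul {R n : Type*} [CommRing R] [Fintype n]
    {A : Matrix n n R} {v w : n → R} {a b : R} (hv : A *ᵥ v = a • v) (hw : w ᵥ* A = b • w) :
    A * vecMulVec v w - vecMulVec v w * A = (a - b) • vecMulVec v w := by
  rw [mul_vecMulVec, vecMulVec_mul, hv, hw, smul_vecMulVec, vecMulVec_smul, sub_smul]

/-- `μ` is an eigenvalue of `ad_Ω : X ↦ Ω*X − X*Ω` on `n×n` complex matrices if and only if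
`μ = λ₁ − λ₂` for some eigenvalues `λ₁, λ₂` of `Ω` (roots of the characteristic polynomial). -/
theorem ad_hasEigenvalue_iff {n : ℕ} (Ω : Matrix (Fin n) (Fin n) ℂ) (μ : ℂ) :
    Module.End.HasEigenvalue
      ((LinearMap.mulLeft ℂ Ω - LinearMap.mulRight ℂ Ω :
        Matrix (Fin n) (Fin n) ℂ →ₗ[ℂ] Matrix (Fin n) (Fin n) ℂ)) μ ↔
    ∃ lam₁ lam₂ : ℂ, Ω.charpoly.IsRoot lam₁ ∧ Ω.charpoly.IsRoot lam₂ ∧ μ = lam₁ - lam₂ := by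
  constructor
  · intro h
    obtain ⟨X, hX, hX0⟩ := h.exists_hasEigenvector
    obtain ⟨ν, hν, hνμ⟩ := exists_isRoot_sub_mem_spectrum_of_mul_sub_mul_eq_smul hX0
      (Module.End.mem_eigenspace_iff.mp hX) Ω.charpoly_monic.ne_zero (aeval_self_charpoly Ω)
    exact ⟨ν, ν - μ, hν, mem_spectrum_iff_isRoot_charpoly.mp hνμ, (sub_sub_cancel ν μ).symm⟩
  · rintro ⟨lam₁, lam₂, h₁, h₂, rfl⟩
    obtain ⟨v, hv0, hv⟩ := exists_mulVec_eq_smul_of_isRoot_charpoly h₁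
    obtain ⟨w, hw0, hw⟩ := exists_vecMul_eq_smul_of_isRoot_charpoly h₂
    exact Module.End.hasEigenvalue_of_hasEigenvector
      ⟨Module.End.mem_eigenspace_iff.mpr (mul_vecMulVec_sub_vecMulVec_mul hv hw),
        vecMulVec_ne_zero hv0 hw0⟩
end

section
/- Let A : ℝ → Matrix (Fin n) (Fin n) ℂ be continuous, let Y : ℝ → Matrix (Fin n) (Fin n) ℂ satisfy Y(0) = 1 and HasDerivAt Y (A(s) * Y(s)) s for all s, and let t ≥ 0 with ∫_{s∈[0,t]} ‖A(s)‖ ds ≤ π. Then for every nonzero vector x ∈ EuclideanSpace ℂ (Fin n), Re ⟪Y(t)·x , x⟫ ≥ cos(∫_{s∈[0,t]} ‖A(s)‖ ds) · ‖Y(t)·x‖ · ‖x‖; i.e., the angle between Y(t)x and x is at most ∫₀^t ‖A(s)‖ ds. -/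
/-!
Write `u s = Y(s) x`, so that `u' = A u` and `‖u'‖ ≤ ‖A‖ ‖u‖`: the angle between `u s` and `x`
moves at speed at most `‖u'‖ / ‖u‖ ≤ ‖A s‖`. Since that angle is not differentiable where it
is `0` or `π`, the comparison is run on cosines: for `ε > 0` and `θ(s) = ∫₀ˢ ‖A‖ + ε (s + 1)`,
the function `cos θ(s) ‖u s‖ ‖x‖ - ⟪u s, x⟫` is `≤ 0` at `s = 0` and has negative derivative
wherever it vanishes while `0 < θ(s) < π`, so it stays `≤ 0` on `[0, t]`; then let `ε → 0`.
That `u` never vanishes comes from the monotonicity of `‖u s‖² e^{2 ∫₀ˢ ‖A‖}`.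
-/

open Real Set Filter
open scoped RealInnerProductSpace Topology

section
variable {E : Type*} [NormedAddCommGroup E] [InnerProductSpace ℝ E]

theorem HasDerivAt.norm_of_ne_zero {u : ℝ → E} {v : E} {s : ℝ} (hu : HasDerivAt u v s)
    (h0 : u s ≠ 0) : HasDerivAt (fun r ↦ ‖u r‖) (⟪u s, v⟫ / ‖u s‖) s := by
  have h := hu.norm_sq.sqrt (by positivity)
  simp only [sqrt_sq (norm_nonneg _)] at h
  convert h using 1
  field_simp

theorem norm_sub_smul_eq_abs_sin_mul_norm {u c : E} {θ : ℝ} (hu : u ≠ 0)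
    (hθ : ⟪u, c⟫ = cos θ * (‖u‖ * ‖c‖)) :
    ‖c - (cos θ * ‖c‖ / ‖u‖) • u‖ = |sin θ| * ‖c‖ := by
  have hu' : ‖u‖ ≠ 0 := norm_ne_zero_iff.mpr hu
  rw [← sqrt_sq (norm_nonneg _), ← sqrt_sq (by positivity : 0 ≤ |sin θ| * ‖c‖)]
  congr 1
  rw [norm_sub_sq_real, real_inner_smul_right, real_inner_comm, hθ, norm_smul, mul_pow,
    Real.norm_eq_abs, sq_abs, mul_pow, sq_abs, sin_sq]
  field_simp
  ring

theorem cos_mul_inner_div_sub_inner_lt {u v c : E} {θ a ε : ℝ} (hu : u ≠ 0) (hc : c ≠ 0)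
    (hsin : 0 < sin θ) (hε : 0 < ε) (hv : ‖v‖ ≤ a * ‖u‖)
    (hθ : ⟪u, c⟫ = cos θ * (‖u‖ * ‖c‖)) :
    cos θ * (⟪u, v⟫ / ‖u‖ * ‖c‖) - ⟪v, c⟫ < sin θ * (a + ε) * (‖u‖ * ‖c‖) := by
  -- `w` is the component of `c` orthogonal to `u`.
  set w := c - (cos θ * ‖c‖ / ‖u‖) • u
  have hw : ‖w‖ = sin θ * ‖c‖ := by
    rw [norm_sub_smul_eq_abs_sin_mul_norm hu hθ, abs_of_pos hsin]
  have hvw : cos θ * (⟪u, v⟫ / ‖u‖ * ‖c‖) - ⟪v, c⟫ = -⟪v, w⟫ := by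
    rw [inner_sub_right, real_inner_smul_right, real_inner_comm u v]
    ring
  have hpos : 0 < ε * (sin θ * (‖u‖ * ‖c‖)) := by
    have := norm_pos_iff.mpr hu
    have := norm_pos_iff.mpr hc
    positivity
  calc cos θ * (⟪u, v⟫ / ‖u‖ * ‖c‖) - ⟪v, c⟫ = -⟪v, w⟫ := hvw
    _ ≤ ‖v‖ * ‖w‖ := (neg_le_abs _).trans (abs_real_inner_le_norm v w)
    _ ≤ a * ‖u‖ * (sin θ * ‖c‖) := by rw [hw]; gcongr
    _ < sin θ * (a + ε) * (‖u‖ * ‖c‖) := by nlinarith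

variable {u v : ℝ → E} {φ a : ℝ → ℝ}

theorem monotone_norm_sq_mul_exp (hu : ∀ s, HasDerivAt u (v s) s)
    (hφ : ∀ s, HasDerivAt φ (a s) s) (hv : ∀ s, ‖v s‖ ≤ a s * ‖u s‖) :
    Monotone fun s ↦ ‖u s‖ ^ 2 * exp (2 * φ s) := by
  have hd : ∀ s, HasDerivAt (fun s ↦ ‖u s‖ ^ 2 * exp (2 * φ s))
      (2 * ⟪u s, v s⟫ * exp (2 * φ s) + ‖u s‖ ^ 2 * (exp (2 * φ s) * (2 * a s))) s :=
    fun s ↦ (hu s).norm_sq.mul ((hφ s).const_mul 2).exp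
  refine monotone_of_deriv_nonneg (fun s ↦ (hd s).differentiableAt) fun s ↦ ?_
  rw [(hd s).deriv]
  have hcs := neg_le_of_abs_le (abs_real_inner_le_norm (u s) (v s))
  have hinner : -(a s * ‖u s‖ ^ 2) ≤ ⟪u s, v s⟫ := by
    nlinarith [mul_le_mul_of_nonneg_left (hv s) (norm_nonneg (u s))]
  have := exp_pos (2 * φ s)
  nlinarith

theorem ne_zero_of_norm_deriv_le_mul_norm (hu : ∀ s, HasDerivAt u (v s) s)
    (hφ : ∀ s, HasDerivAt φ (a s) s) (hv : ∀ s, ‖v s‖ ≤ a s * ‖u s‖) {s₀ s : ℝ}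
    (h₀ : u s₀ ≠ 0) (hs : s₀ ≤ s) : u s ≠ 0 := by
  have hpos : 0 < ‖u s₀‖ ^ 2 * exp (2 * φ s₀) :=
    mul_pos (pow_pos (norm_pos_iff.mpr h₀) 2) (exp_pos _)
  have := hpos.trans_le (monotone_norm_sq_mul_exp hu hφ hv hs)
  intro h
  simp [h] at this

theorem monotoneOn_of_norm_deriv_le_mul_norm (hu : ∀ s, HasDerivAt u (v s) s)
    (hφ : ∀ s, HasDerivAt φ (a s) s) (hv : ∀ s, ‖v s‖ ≤ a s * ‖u s‖) {s₀ : ℝ}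
    (h₀ : u s₀ ≠ 0) : MonotoneOn φ (Ici s₀) := by
  have ha : ∀ s, s₀ ≤ s → 0 ≤ a s := fun s hs ↦
    nonneg_of_mul_nonneg_left ((norm_nonneg _).trans (hv s))
      (norm_pos_iff.mpr (ne_zero_of_norm_deriv_le_mul_norm hu hφ hv h₀ hs))
  exact monotoneOn_of_hasDerivWithinAt_nonneg (convex_Ici s₀)
    (fun s _ ↦ (hφ s).continuousAt.continuousWithinAt) (fun s _ ↦ (hφ s).hasDerivWithinAt)
    (fun s hs ↦ ha s (interior_subset hs))

theorem cos_add_mul_norm_mul_norm_le_inner (hu : ∀ s, HasDerivAt u (v s) s)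
    (hφ : ∀ s, HasDerivAt φ (a s) s) (hv : ∀ s, ‖v s‖ ≤ a s * ‖u s‖) (hφ0 : φ 0 = 0)
    (h0 : u 0 ≠ 0) {ε t : ℝ} (hε : 0 < ε) (ht : 0 ≤ t) (hπ : φ t + ε * (t + 1) ≤ π) :
    cos (φ t + ε * (t + 1)) * (‖u t‖ * ‖u 0‖) ≤ ⟪u t, u 0⟫ := by
  set c := u 0
  have hne : ∀ s, 0 ≤ s → u s ≠ 0 := fun s ↦ ne_zero_of_norm_deriv_le_mul_norm hu hφ hv h0
  have hφmono := monotoneOn_of_norm_deriv_le_mul_norm hu hφ hv h0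
  set θ : ℝ → ℝ := fun s ↦ φ s + ε * (s + 1)
  have hθ : ∀ s, HasDerivAt θ (a s + ε) s := fun s ↦
    ((hφ s).add (((hasDerivAt_id s).add_const 1).const_mul ε)).congr_deriv (by rw [mul_one])
  set f : ℝ → ℝ := fun s ↦ cos (θ s) * (‖u s‖ * ‖c‖) - ⟪u s, c⟫
  set f' : ℝ → ℝ := fun s ↦
    -sin (θ s) * (a s + ε) * (‖u s‖ * ‖c‖) + cos (θ s) * (⟪u s, v s⟫ / ‖u s‖ * ‖c‖) - ⟪v s, c⟫
  have hf : ∀ s, 0 ≤ s → HasDerivAt f (f' s) s := fun s hs ↦ by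
    refine (((hθ s).cos.mul (((hu s).norm_of_ne_zero (hne s hs)).mul_const ‖c‖)).sub
      ((hu s).inner ℝ (hasDerivAt_const s c))).congr_deriv ?_
    simp only [f', inner_zero_right, zero_add, neg_mul]
  have bound : ∀ s ∈ Ico 0 t, f s = 0 → f' s < 0 := by
    rintro s ⟨hs0, hst⟩ hfs
    have hθpos : 0 < θ s := by
      have := hφmono (le_refl (0 : ℝ)) hs0 hs0
      simp only [θ]; nlinarith
    have hθπ : θ s < π := by
      have := hφmono hs0 ht hst.le
      simp only [θ]; nlinarith
    have := cos_mul_inner_div_sub_inner_lt (hne s hs0) h0 (sin_pos_of_pos_of_lt_pi hθpos hθπ) hε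
      (hv s) (by linarith : ⟪u s, c⟫ = cos (θ s) * (‖u s‖ * ‖c‖))
    simp only [f']; linarith
  have := image_le_of_deriv_right_lt_deriv_boundary (a := 0) (b := t) (B := 0) (B' := 0)
    (fun s hs ↦ (hf s hs.1).continuousAt.continuousWithinAt)
    (fun s hs ↦ (hf s hs.1).hasDerivWithinAt) ?_ (fun _ ↦ hasDerivAt_const _ _) bound ⟨ht, le_rfl⟩
  · simp only [f, θ, Pi.zero_apply] at this; linarith
  · have := cos_le_one (θ 0)
    change cos (θ 0) * (‖c‖ * ‖c‖) - ⟪c, c⟫ ≤ 0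
    rw [real_inner_self_eq_norm_mul_norm]
    nlinarith [mul_self_nonneg ‖c‖]

theorem cos_mul_norm_mul_norm_le_inner (hu : ∀ s, HasDerivAt u (v s) s)
    (hφ : ∀ s, HasDerivAt φ (a s) s) (hv : ∀ s, ‖v s‖ ≤ a s * ‖u s‖) (hφ0 : φ 0 = 0)
    {t : ℝ} (ht : 0 ≤ t) (hπ : φ t ≤ π) :
    cos (φ t) * (‖u t‖ * ‖u 0‖) ≤ ⟪u t, u 0⟫ := by
  rcases eq_or_ne (u 0) 0 with h0 | h0
  · simp [h0]
  rcases hπ.lt_or_eq with hlt | heq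
  · have hδ : 0 < (π - φ t) / (t + 1) := div_pos (by linarith) (by linarith)
    have hcont : Continuous fun ε ↦ cos (φ t + ε * (t + 1)) * (‖u t‖ * ‖u 0‖) := by fun_prop
    have hlim : Tendsto (fun ε ↦ cos (φ t + ε * (t + 1)) * (‖u t‖ * ‖u 0‖)) (𝓝[>] 0)
        (𝓝 (cos (φ t) * (‖u t‖ * ‖u 0‖))) := by
      simpa using (hcont.tendsto 0).mono_left nhdsWithin_le_nhds
    refine le_of_tendsto hlim ?_
    filter_upwards [Ioo_mem_nhdsGT hδ] with ε ⟨hε, hεδ⟩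
    refine cos_add_mul_norm_mul_norm_le_inner hu hφ hv hφ0 h0 hε ht ?_
    rw [lt_div_iff₀ (by linarith)] at hεδ
    linarith
  · rw [heq, cos_pi, neg_one_mul]
    exact neg_le_of_abs_le (abs_real_inner_le_norm _ _)

end

open scoped Matrix.Norms.L2Operator

theorem HasDerivAt.toEuclideanLin_apply {n : Type*} [Fintype n] [DecidableEq n]
    {Y : ℝ → Matrix n n ℂ} {Y' : Matrix n n ℂ} {s : ℝ} (hY : HasDerivAt Y Y' s)
    (x : EuclideanSpace ℂ n) :
    HasDerivAt (fun r ↦ Matrix.toEuclideanLin (Y r) x) (Matrix.toEuclideanLin Y' x) s :=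
  let L : Matrix n n ℂ →L[ℝ] EuclideanSpace ℂ n :=
    ((LinearMap.applyₗ x ∘ₗ Matrix.toEuclideanLin.toLinearMap).restrictScalars ℝ)
      |>.toContinuousLinearMap
  L.hasFDerivAt.comp_hasDerivAt s hY

theorem EuclideanSpace.real_inner_eq_re_inner {ι : Type*} [Fintype ι]
    (x y : EuclideanSpace ℂ ι) : ⟪x, y⟫ = (inner ℂ x y).re := by
  simp [PiLp.inner_apply, Complex.re_sum]

theorem angle_bound_general {n : ℕ} (A : ℝ → Matrix (Fin n) (Fin n) ℂ) (hA : Continuous A)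
    (Y : ℝ → Matrix (Fin n) (Fin n) ℂ) (hY0 : Y 0 = 1)
    (hY : ∀ s, HasDerivAt Y (A s * Y s) s)
    (t : ℝ) (ht : 0 ≤ t) (hint : (∫ s in (0:ℝ)..t, ‖A s‖) ≤ Real.pi)
    (x : EuclideanSpace ℂ (Fin n)) :
    Real.cos (∫ s in (0:ℝ)..t, ‖A s‖) * ‖Matrix.toEuclideanLin (Y t) x‖ * ‖x‖ ≤
      (inner ℂ (Matrix.toEuclideanLin (Y t) x) x : ℂ).re := by
  have key := cos_mul_norm_mul_norm_le_inner
    (u := fun s ↦ Matrix.toEuclideanLin (Y s) x) (v := fun s ↦ Matrix.toEuclideanLin (A s * Y s) x)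
    (φ := fun s ↦ ∫ r in (0:ℝ)..s, ‖A r‖) (fun s ↦ (hY s).toEuclideanLin_apply x)
    (fun s ↦ (hA.norm.integral_hasStrictDerivAt 0 s).hasDerivAt) (fun s ↦ ?_)
    intervalIntegral.integral_same ht hint
  · simpa [hY0, mul_assoc, EuclideanSpace.real_inner_eq_re_inner] using key
  · rw [Matrix.toLpLin_mul_same, LinearMap.comp_apply]
    exact (Matrix.toEuclideanCLM (𝕜 := ℂ) (A s)).le_opNorm _

/-- If `Y' = A(s) Y`, `Y(0) = I` and `∫₀ᵗ ‖A(s)‖ ds ≤ π`, then for every nonzero vector `x`,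
`Re ⟪Y(t) x, x⟫ ≥ cos (∫₀ᵗ ‖A(s)‖ ds) ‖Y(t) x‖ ‖x‖`, i.e. the angle between `Y(t) x` and `x`
is at most `∫₀ᵗ ‖A(s)‖ ds`. -/
theorem angle_bound {n : ℕ} (A : ℝ → Matrix (Fin n) (Fin n) ℂ) (hA : Continuous A)
    (Y : ℝ → Matrix (Fin n) (Fin n) ℂ) (hY0 : Y 0 = 1)
    (hY : ∀ s, HasDerivAt Y (A s * Y s) s)
    (t : ℝ) (ht : 0 ≤ t) (hint : (∫ s in (0:ℝ)..t, ‖A s‖) ≤ Real.pi)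
    (x : EuclideanSpace ℂ (Fin n)) (hx : x ≠ 0) :
    Real.cos (∫ s in (0:ℝ)..t, ‖A s‖) * ‖Matrix.toEuclideanLin (Y t) x‖ * ‖x‖ ≤
      (inner ℂ (Matrix.toEuclideanLin (Y t) x) x : ℂ).re :=
  angle_bound_general A hA Y hY0 hY t ht hint x
end

section
/- Let T be an n×n complex matrix and let 0 ≤ γ ≤ π. Suppose that for every nonzero x ∈ EuclideanSpace ℂ (Fin n) one has Re ⟪T·x, x⟫ ≥ cos γ · ‖T·x‖ · ‖x‖ and Re ⟪Tᴴ·x, x⟫ ≥ cos γ · ‖Tᴴ·x‖ · ‖x‖, where Tᴴ is the conjugate transpose. Then every eigenvalue z of T satisfies |arg z| ≤ γ, where arg is the principal argument in (−π, π]. -/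
open scoped Matrix.Norms.L2Operator

/-! For an eigenvector `x` of `T` with eigenvalue `z`, the angle condition on `T x = z • x` reads
`cos γ * ‖z‖ ≤ re z`, i.e. `cos γ ≤ cos (arg z)`, and `cos` is decreasing on `[0, π]`. -/

theorem Complex.abs_arg_le_of_cos_mul_norm_le_re {γ : ℝ} (hγ : 0 ≤ γ) {z : ℂ}
    (h : Real.cos γ * ‖z‖ ≤ z.re) : |z.arg| ≤ γ := by
  rcases eq_or_ne z 0 with rfl | hz
  · simpa using hγ
  by_contra! hlt
  have hcos : Real.cos z.arg < Real.cos γ := by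
    rw [← Real.cos_abs]
    exact Real.cos_lt_cos_of_nonneg_of_le_pi hγ (Complex.abs_arg_le_pi z) hlt
  rw [Complex.cos_arg hz, div_lt_iff₀ (norm_pos_iff.mpr hz)] at hcos
  linarith

theorem mul_norm_le_re_of_le_re_inner_smul {E : Type*} [NormedAddCommGroup E]
    [InnerProductSpace ℂ E] {c : ℝ} {z : ℂ} {x : E} (hx : x ≠ 0)
    (h : c * ‖z • x‖ * ‖x‖ ≤ (inner ℂ (z • x) x).re) : c * ‖z‖ ≤ z.re := by
  have hinner : (inner ℂ (z • x) x).re = z.re * ‖x‖ ^ 2 := by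
    simp [inner_self_eq_norm_sq_to_K, ← Complex.ofReal_pow, mul_comm]
  rw [norm_smul, hinner] at h
  have hx' : 0 < ‖x‖ ^ 2 := by positivity
  nlinarith

theorem Matrix.exists_toEuclideanLin_eq_smul_of_isRoot_charpoly {ι 𝕜 : Type*} [RCLike 𝕜]
    [Fintype ι] [DecidableEq ι] {A : Matrix ι ι 𝕜} {μ : 𝕜} (h : A.charpoly.IsRoot μ) :
    ∃ x : EuclideanSpace 𝕜 ι, x ≠ 0 ∧ Matrix.toEuclideanLin A x = μ • x := by
  have hcharpoly : (Matrix.toEuclideanLin A).charpoly = A.charpoly := by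
    rw [Matrix.toEuclideanLin_eq_toLin_orthonormal, Matrix.charpoly_toLin]
  rw [← hcharpoly, ← Module.End.hasEigenvalue_iff_isRoot_charpoly] at h
  obtain ⟨x, hx⟩ := h.exists_hasEigenvector
  exact ⟨x, hx.2, Module.End.mem_eigenspace_iff.mp hx.1⟩

theorem eigenvalue_arg_bound_general {n : ℕ} (T : Matrix (Fin n) (Fin n) ℂ) (γ : ℝ)
    (hγ0 : 0 ≤ γ)
    (h1 : ∀ x : EuclideanSpace ℂ (Fin n), x ≠ 0 →
      Real.cos γ * ‖Matrix.toEuclideanLin T x‖ * ‖x‖ ≤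
        (inner ℂ (Matrix.toEuclideanLin T x) x : ℂ).re)
    (z : ℂ) (hz : T.charpoly.IsRoot z) :
    |z.arg| ≤ γ := by
  obtain ⟨x, hx0, hTx⟩ := Matrix.exists_toEuclideanLin_eq_smul_of_isRoot_charpoly hz
  exact Complex.abs_arg_le_of_cos_mul_norm_le_re hγ0
    (mul_norm_le_re_of_le_re_inner_smul hx0 (hTx ▸ h1 x hx0))

/-- If for every nonzero `x` the angles between `T x` and `x` and between `Tᴴ x` and `x` are at
most `γ` (with `0 ≤ γ ≤ π`), then every eigenvalue `z` of `T` satisfies `|arg z| ≤ γ`. -/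
theorem eigenvalue_arg_bound {n : ℕ} (T : Matrix (Fin n) (Fin n) ℂ) (γ : ℝ)
    (hγ0 : 0 ≤ γ) (hγπ : γ ≤ Real.pi)
    (h1 : ∀ x : EuclideanSpace ℂ (Fin n), x ≠ 0 →
      Real.cos γ * ‖Matrix.toEuclideanLin T x‖ * ‖x‖ ≤
        (inner ℂ (Matrix.toEuclideanLin T x) x : ℂ).re)
    (h2 : ∀ x : EuclideanSpace ℂ (Fin n), x ≠ 0 →
      Real.cos γ * ‖Matrix.toEuclideanLin T.conjTranspose x‖ * ‖x‖ ≤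
        (inner ℂ (Matrix.toEuclideanLin T.conjTranspose x) x : ℂ).re)
    (z : ℂ) (hz : T.charpoly.IsRoot z) :
    |z.arg| ≤ γ :=
  eigenvalue_arg_bound_general T γ hγ0 h1 z hz
end

section
/- Let X₁ = !![1, 0; 0, −1] and X₂ = !![0, 1; 0, 0] as 2×2 complex matrices, and let α, β ∈ ℂ with exp(−2α) ≠ 1. Then exp(α • X₁ + (2αβ/(1 − exp(−2α))) • X₂) = exp(α • X₁) * exp(β • X₂); i.e., log(e^{αX₁} e^{βX₂}) = αX₁ + (2αβ/(1 − e^{−2α})) X₂. -/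
/-!
Since `exp(-2α) ≠ 1` forces `α ≠ -α`, the matrix `α • X₁ + γ • X₂ = !![α, γ; 0, -α]` has distinct
diagonal entries and is conjugate, by a unipotent upper triangular matrix, to `!![α, 0; 0, -α]`.
This gives `exp !![a, b; 0, d] = !![eᵃ, b (eᵃ - eᵈ) / (a - d); 0, eᵈ]` for `a ≠ d`, while
`exp (β • X₂) = 1 + β • X₂` because `X₂² = 0`. Comparing entries, the identity reduces to
`eᵅ (1 - e⁻²ᵅ) = eᵅ - e⁻ᵅ`.
-/

open NormedSpace Matrix

theorem NormedSpace.exp_eq_one_add_of_sq_eq_zero {𝔸 : Type*} [Ring 𝔸] [Algebra ℚ 𝔸]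
    [TopologicalSpace 𝔸] [IsTopologicalRing 𝔸] {x : 𝔸} (hx : x ^ 2 = 0) : exp x = 1 + x := by
  have hpow : ∀ n ∉ Finset.range 2, (n.factorial⁻¹ : ℚ) • x ^ n = 0 := fun n hn => by
    obtain ⟨k, rfl⟩ := Nat.exists_eq_add_of_le' (not_lt.mp (Finset.mem_range.not.mp hn))
    rw [pow_add, hx, mul_zero, smul_zero]
  rw [congrFun exp_eq_tsum_rat x, tsum_eq_sum hpow]
  simp [Finset.sum_range_succ]

namespace Matrix

theorem exp_fin_two_strictUpper {R : Type*} [CommRing R] [Algebra ℚ R] [TopologicalSpace R]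
    [IsTopologicalRing R] (b : R) : exp !![0, b; 0, 0] = !![1, b; 0, 1] := by
  have hsq : !![0, b; 0, 0] ^ 2 = 0 := by
    ext i j
    fin_cases i <;> fin_cases j <;> simp [sq]
  rw [exp_eq_one_add_of_sq_eq_zero hsq]
  ext i j
  fin_cases i <;> fin_cases j <;> simp

theorem inv_fin_two_unipotent {R : Type*} [CommRing R] (t : R) :
    (!![1, t; 0, 1] : Matrix (Fin 2) (Fin 2) R)⁻¹ = !![1, -t; 0, 1] :=
  inv_eq_right_inv <| by simp [one_fin_two]

theorem isUnit_fin_two_unipotent {R : Type*} [CommRing R] (t : R) :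
    IsUnit (!![1, t; 0, 1] : Matrix (Fin 2) (Fin 2) R) :=
  (isUnit_iff_isUnit_det _).mpr <| by simp [det_fin_two_of]

theorem fin_two_upperTriangular_eq_conj {K : Type*} [Field K] {a d : K} (b : K) (h : a ≠ d) :
    !![a, b; 0, d] =
      !![1, b / (d - a); 0, 1] * !![a, 0; 0, d] * (!![1, b / (d - a); 0, 1])⁻¹ := by
  have hda : d - a ≠ 0 := sub_ne_zero.mpr h.symm
  rw [inv_fin_two_unipotent]
  ext i j
  fin_cases i <;> fin_cases j <;> simp
  field_simp
  ring

theorem exp_fin_two_diagonal (a d : ℂ) :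
    exp !![a, 0; 0, d] = !![Complex.exp a, 0; 0, Complex.exp d] := by
  have hdiag : !![a, 0; 0, d] = diagonal ![a, d] := by
    ext i j
    fin_cases i <;> fin_cases j <;> rfl
  rw [hdiag, exp_diagonal]
  ext i j
  fin_cases i <;> fin_cases j <;> simp [Complex.exp_eq_exp_ℂ]

theorem exp_fin_two_upperTriangular {a d : ℂ} (b : ℂ) (h : a ≠ d) :
    exp !![a, b; 0, d] =
      !![Complex.exp a, b * (Complex.exp a - Complex.exp d) / (a - d); 0, Complex.exp d] := by
  have had : a - d ≠ 0 := sub_ne_zero.mpr h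
  have hda : d - a ≠ 0 := sub_ne_zero.mpr h.symm
  rw [fin_two_upperTriangular_eq_conj b h, exp_conj _ _ (isUnit_fin_two_unipotent _),
    exp_fin_two_diagonal, inv_fin_two_unipotent]
  ext i j
  fin_cases i <;> fin_cases j <;> simp
  field_simp
  ring

end Matrix

/-- For `X₁ = !![1,0;0,-1]`, `X₂ = !![0,1;0,0]` and `α, β ∈ ℂ` with `exp(-2α) ≠ 1`,
`log (e^{αX₁} e^{βX₂}) = α X₁ + (2αβ/(1 - e^{-2α})) X₂`. -/
theorem log_exp_mul_exp (α β : ℂ) (h : Complex.exp (-(2 * α)) ≠ 1) :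
    NormedSpace.exp
        (α • (!![1, 0; 0, -1] : Matrix (Fin 2) (Fin 2) ℂ) +
          (2 * α * β / (1 - Complex.exp (-(2 * α)))) •
            (!![0, 1; 0, 0] : Matrix (Fin 2) (Fin 2) ℂ)) =
      NormedSpace.exp (α • (!![1, 0; 0, -1] : Matrix (Fin 2) (Fin 2) ℂ)) *
        NormedSpace.exp (β • (!![0, 1; 0, 0] : Matrix (Fin 2) (Fin 2) ℂ)) := by
  set γ := 2 * α * β / (1 - Complex.exp (-(2 * α))) with hγ
  have hα : α ≠ 0 := by rintro rfl; simp at h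
  have hden : 1 - Complex.exp (-(2 * α)) ≠ 0 := sub_ne_zero.mpr h.symm
  have hM : α • !![1, 0; 0, -1] + γ • !![0, 1; 0, 0] = !![α, γ; 0, -α] := by
    ext i j; fin_cases i <;> fin_cases j <;> simp
  have hD : α • !![1, 0; 0, -1] = !![α, 0; 0, -α] := by
    ext i j; fin_cases i <;> fin_cases j <;> simp
  have hN : β • !![0, 1; 0, 0] = !![0, β; 0, 0] := by
    ext i j; fin_cases i <;> fin_cases j <;> simp
  have hexp : Complex.exp α * (1 - Complex.exp (-(2 * α))) = Complex.exp α - Complex.exp (-α) := by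
    rw [mul_sub, ← Complex.exp_add]; ring_nf
  have hcoef : γ * (Complex.exp α - Complex.exp (-α)) / (α - -α) = Complex.exp α * β := by
    rw [hγ, ← hexp]; field_simp; ring
  rw [hM, hD, hN, exp_fin_two_upperTriangular _ (self_ne_neg.mpr hα), exp_fin_two_diagonal,
    exp_fin_two_strictUpper, mul_fin_two, hcoef]
  simp
end

section
/- Let γ, ξ ∈ ℝ with (γ, ξ) ≠ (0, 0), let σ₁ = !![0, 1; 1, 0] and σ₃ = !![1, 0; 0, −1] be the complex Pauli matrices, and set U := exp(−i • ((ξ/2) • σ₃ + γ • σ₁)). Then the squared modulus of the (0,1) entry of U equals (4γ²/(4γ² + ξ²)) · (sin √(γ² + ξ²/4))²; i.e., the spin-flip transition probability for the rectangular step is P = 4γ²/(4γ²+ξ²) · sin²√(γ²+ξ²/4). -/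
open NormedSpace

/-- The even and odd parts of the exponential series of `a` are the power series of `cos z` and
of `sin z / z` times `a`. -/
theorem exp_eq_cos_add_sin_div_smul {𝔸 : Type*} [NormedRing 𝔸] [NormedAlgebra ℂ 𝔸]
    [CompleteSpace 𝔸] {a : 𝔸} {z : ℂ} (hz : z ≠ 0) (ha : a ^ 2 = -z ^ 2 • (1 : 𝔸)) :
    exp a = Complex.cos z • (1 : 𝔸) + (Complex.sin z / z) • a := by
  rw [exp_eq_tsum ℂ]
  refine HasSum.tsum_eq (HasSum.even_add_odd ?_ ?_)
  · convert (Complex.hasSum_cos z).smul_const (1 : 𝔸) using 2 with n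
    rw [pow_mul, ha, smul_pow, one_pow, smul_smul, neg_pow]
    congr 1
    ring
  · convert ((Complex.hasSum_sin z).div_const z).smul_const a using 2 with n
    rw [pow_succ, pow_mul, ha, smul_pow, one_pow, smul_one_mul, smul_smul, neg_pow]
    congr 1
    field_simp
    ring

theorem sq_smul_pauliZ_add_smul_pauliX (a b : ℝ) :
    (a • (!![1, 0; 0, -1] : Matrix (Fin 2) (Fin 2) ℂ) + b • !![0, 1; 1, 0]) ^ 2 =
      ((a ^ 2 + b ^ 2 : ℝ) : ℂ) • (1 : Matrix (Fin 2) (Fin 2) ℂ) := by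
  ext i j
  fin_cases i <;> fin_cases j <;> simp [sq, Matrix.mul_apply, Fin.sum_univ_two] <;> ring

attribute [local instance] Matrix.linftyOpNormedRing Matrix.linftyOpNormedAlgebra

/-- Spin-flip transition probability for the rectangular step: with
`U = exp (-i ((ξ/2) σ₃ + γ σ₁))`, the squared modulus of the `(0,1)` entry of `U` equals
`4γ²/(4γ²+ξ²) · sin² √(γ² + ξ²/4)`. -/
theorem rectangular_step_transition_probability (γ ξ : ℝ) (h : (γ, ξ) ≠ (0, 0)) :
    ‖((NormedSpace.exp
            ((-Complex.I) •
              ((ξ / 2) • (!![1, 0; 0, -1] : Matrix (Fin 2) (Fin 2) ℂ) +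
                γ • (!![0, 1; 1, 0] : Matrix (Fin 2) (Fin 2) ℂ)))) 0 1)‖ ^ 2 =
      4 * γ ^ 2 / (4 * γ ^ 2 + ξ ^ 2) *
        Real.sin (Real.sqrt (γ ^ 2 + ξ ^ 2 / 4)) ^ 2 := by
  have hpos : 0 < γ ^ 2 + ξ ^ 2 / 4 := by
    rcases eq_or_ne γ 0 with rfl | hγ
    · have hξ : ξ ≠ 0 := by rintro rfl; exact h rfl
      positivity
    · positivity
  set ω := Real.sqrt (γ ^ 2 + ξ ^ 2 / 4)
  have hω : ω ^ 2 = γ ^ 2 + ξ ^ 2 / 4 := Real.sq_sqrt hpos.le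
  have hω0 : (ω : ℂ) ≠ 0 := Complex.ofReal_ne_zero.mpr (Real.sqrt_pos.mpr hpos).ne'
  set A : Matrix (Fin 2) (Fin 2) ℂ :=
    (-Complex.I) • ((ξ / 2) • !![1, 0; 0, -1] + γ • !![0, 1; 1, 0]) with hA
  have hsq : A ^ 2 = -(ω : ℂ) ^ 2 • (1 : Matrix (Fin 2) (Fin 2) ℂ) := by
    rw [hA, smul_pow, sq_smul_pauliZ_add_smul_pauliX, smul_smul, ← Complex.ofReal_pow, hω,
      neg_sq, Complex.I_sq]
    push_cast
    congr 1
    ring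
  have hentry : exp A 0 1 = Complex.sin ω / ω * (-Complex.I * γ) := by
    -- `erw`: the lemma's `exp` carries the instances of the normed structure, which agree with
    -- those of the statement only up to unfolding.
    erw [exp_eq_cos_add_sin_div_smul hω0 hsq]
    simp [hA]
  rw [hentry, ← Complex.ofReal_sin]
  simp only [norm_mul, norm_div, norm_neg, Complex.norm_I, Complex.norm_real, Real.norm_eq_abs,
    one_mul, div_pow, mul_pow, sq_abs, hω]
  field_simp
end

section
/- Let A : ℝ → Matrix (Fin n) (Fin n) ℂ be continuous and let Y : ℝ → Matrix (Fin n) (Fin n) ℂ satisfy Y(0) = 1 and HasDerivAt Y (A(s) * Y(s)) s for all s. Then for all t, det(Y(t)) = exp(∫_{s∈[0,t]} trace(A(s)) ds). -/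
/-!
Jacobi's formula: differentiating the determinant row by row, `(det Y)'` is the sum over `i` of
`det Y` with its `i`-th row replaced by the `i`-th row of `Y' = A Y`, that is by `∑ₖ Aᵢₖ Yₖ`;
multilinearity and alternation leave `Aᵢᵢ det Y`, so `(det Y)' = tr A · det Y`. Hence `det Y`
solves a scalar linear ODE, and `det Y · exp (-∫₀ᵗ tr A)` has derivative zero.
-/

namespace Matrix

variable {ι R : Type*} [Fintype ι] [DecidableEq ι]

theorem det_updateRow_mul_self [CommRing R] (A M : Matrix ι ι R) (i : ι) :
    (M.updateRow i ((A * M) i)).det = A i i * M.det := by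
  have hrow : (A * M) i = ∑ k, A i k • M k := by
    ext j
    simp [mul_apply, Finset.sum_apply]
  rw [hrow, det_updateRow_sum, smul_eq_mul]

theorem sum_det_updateRow_mul_self [CommRing R] (A M : Matrix ι ι R) :
    ∑ i, (M.updateRow i ((A * M) i)).det = A.trace * M.det := by
  simp only [det_updateRow_mul_self, trace, diag, Finset.sum_mul]

variable (ι) in
noncomputable def detRowContinuousMultilinear (𝕜 : Type*) [NontriviallyNormedField 𝕜] :
    ContinuousMultilinearMap 𝕜 (fun _ : ι => ι → 𝕜) 𝕜 :=
  { (detRowAlternating : (ι → 𝕜) [⋀^ι]→ₗ[𝕜] 𝕜).toMultilinearMap with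
    cont := continuous_id.matrix_det }

end Matrix

theorem HasDerivAt.matrix_det {𝕜 𝕜' ι : Type*} [NontriviallyNormedField 𝕜]
    [NontriviallyNormedField 𝕜'] [NormedAlgebra 𝕜 𝕜'] [Fintype ι] [DecidableEq ι]
    {Y : 𝕜 → Matrix ι ι 𝕜'} {Y' : Matrix ι ι 𝕜'} {s : 𝕜} (hY : HasDerivAt Y Y' s) :
    HasDerivAt (fun t => (Y t).det) (∑ i, ((Y s).updateRow i (Y' i)).det) s :=
  -- `Matrix ι ι 𝕜'` carries the product topology, so `hY` is read as a derivative of the rows.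
  ((((Matrix.detRowContinuousMultilinear ι 𝕜').hasFDerivAt (Y s)).restrictScalars 𝕜).comp_hasDerivAt
    s hY).congr_deriv (ContinuousMultilinearMap.linearDeriv_apply _ _ _)

theorem eq_mul_exp_integral_of_hasDerivAt {f a : ℝ → ℂ} (ha : Continuous a)
    (hf : ∀ s, HasDerivAt f (a s * f s) s) (t : ℝ) :
    f t = f 0 * Complex.exp (∫ s in (0:ℝ)..t, a s) := by
  set g : ℝ → ℂ := fun u => ∫ s in (0:ℝ)..u, a s
  have hg (u : ℝ) : HasDerivAt g (a u) u := (ha.integral_hasStrictDerivAt 0 u).hasDerivAt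
  have hderiv (u : ℝ) : HasDerivAt (fun u => f u * Complex.exp (-g u)) 0 u := by
    refine ((hf u).mul (hg u).neg.cexp).congr_deriv ?_
    ring
  have hconst := is_const_of_deriv_eq_zero (fun u => (hderiv u).differentiableAt)
    (fun u => (hderiv u).deriv) t 0
  simp only [g, intervalIntegral.integral_same, neg_zero, Complex.exp_zero, mul_one] at hconst
  rw [← hconst, mul_assoc, ← Complex.exp_add, neg_add_cancel, Complex.exp_zero, mul_one]

/-- Liouville's formula: if `Y' = A(s) Y`, `Y(0) = I`, then
`det (Y t) = exp (∫₀ᵗ tr (A s) ds)`. -/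
theorem det_eq_exp_integral_trace {n : ℕ} (A : ℝ → Matrix (Fin n) (Fin n) ℂ)
    (hA : Continuous A) (Y : ℝ → Matrix (Fin n) (Fin n) ℂ) (hY0 : Y 0 = 1)
    (hY : ∀ s, HasDerivAt Y (A s * Y s) s) (t : ℝ) :
    (Y t).det = Complex.exp (∫ s in (0:ℝ)..t, (A s).trace) := by
  have hdet (s : ℝ) : HasDerivAt (fun t => (Y t).det) ((A s).trace * (Y s).det) s := by
    simpa only [Matrix.sum_det_updateRow_mul_self] using (hY s).matrix_det
  rw [eq_mul_exp_integral_of_hasDerivAt hA.matrix_trace hdet t, hY0, Matrix.det_one, one_mul]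
end

section
/- Let A : ℝ → Matrix (Fin n) (Fin n) ℂ be continuous and suppose that for every t, A(t) commutes with ∫_{s∈[0,t]} A(s) ds. Then the function Y(t) := exp(∫_{s∈[0,t]} A(s) ds) satisfies Y(0) = 1 and HasDerivAt Y (A(t) * Y(t)) t for every t; i.e., when A commutes with its integral, Y(t) = exp(∫₀^t A(s) ds) solves Y' = A(t)Y, Y(0) = I. -/
open scoped Matrix.Norms.L2Operator

open NormedSpace

section

variable {𝕂 𝔸 : Type*} [RCLike 𝕂] [NormedRing 𝔸] [NormedAlgebra 𝕂 𝔸] [CompleteSpace 𝔸]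

/-- Along a direction `y` commuting with `x`, `exp (x + s • y) = exp x * exp (s • y)`, whose
derivative at `s = 0` is `exp x * y`; uniqueness of derivatives identifies it with the value of
the Fréchet derivative of the (analytic) map `exp`. -/
theorem fderiv_exp_apply_of_commute {x y : 𝔸} (hxy : Commute x y) :
    fderiv 𝕂 exp x y = exp x * y := by
  have hline : HasDerivAt (fun s : 𝕂 => x + s • y) y 0 := by
    simpa using ((hasDerivAt_id (0 : 𝕂)).smul_const y).const_add x
  have hchain : HasDerivAt (fun s : 𝕂 => exp (x + s • y)) (fderiv 𝕂 exp x y) 0 :=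
    (exp_analytic (𝕂 := 𝕂) x).differentiableAt.hasFDerivAt.comp_hasDerivAt_of_eq 0 hline
      (by simp)
  have hsplit : HasDerivAt (fun s : 𝕂 => exp (x + s • y)) (exp x * y) 0 := by
    have hexp := (hasDerivAt_exp_smul_const y (0 : 𝕂)).const_mul (exp x)
    simp only [zero_smul, exp_zero, one_mul] at hexp
    refine hexp.congr_of_eventuallyEq (Filter.Eventually.of_forall fun s => ?_)
    have hball (z : 𝔸) : z ∈ Metric.eball 0 (expSeries 𝕂 𝔸).radius := by
      simp [expSeries_radius_eq_top]
    exact exp_add_of_commute_of_mem_ball (hxy.smul_right s) (hball _) (hball _)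
  exact hchain.unique hsplit

theorem hasDerivAt_exp_of_commute {f : 𝕂 → 𝔸} {f' : 𝔸} {t : 𝕂} (hf : HasDerivAt f f' t)
    (hc : Commute (f t) f') : HasDerivAt (fun s => exp (f s)) (exp (f t) * f') t := by
  have hchain := (exp_analytic (𝕂 := 𝕂) (f t)).differentiableAt.hasFDerivAt.comp_hasDerivAt t hf
  rwa [fderiv_exp_apply_of_commute hc] at hchain

end

/-- If `A(t)` commutes with its integral `∫₀ᵗ A(s) ds` for every `t`, then
`Y(t) = exp (∫₀ᵗ A(s) ds)` solves `Y' = A(t) Y`, `Y(0) = I`. -/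
theorem exp_integral_solves_ivp {n : ℕ} (A : ℝ → Matrix (Fin n) (Fin n) ℂ)
    (hA : Continuous A)
    (hcomm : ∀ t, Commute (A t) (∫ s in (0:ℝ)..t, A s)) :
    NormedSpace.exp (∫ s in (0:ℝ)..(0:ℝ), A s) = 1 ∧
      ∀ t, HasDerivAt (fun u : ℝ => NormedSpace.exp (∫ s in (0:ℝ)..u, A s))
        (A t * NormedSpace.exp (∫ s in (0:ℝ)..t, A s)) t := by
  refine ⟨by simp, fun t => ?_⟩
  rw [(hcomm t).exp_right.eq]
  exact hasDerivAt_exp_of_commute (hA.integral_hasStrictDerivAt 0 t).hasDerivAt (hcomm t).symm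
end

section
/- Let A : ℝ → Matrix (Fin n) (Fin n) ℂ be infinitely differentiable (ContDiff ℝ ⊤) and let Y : ℝ → Matrix (Fin n) (Fin n) ℂ satisfy Y(0) = 1 and HasDerivAt Y (A(s) * Y(s)) s for all s. Define Ω(t) := ∫_{s∈[0,t]} A(s) ds + (1/2) • ∫_{s₁∈[0,t]} (∫_{s₂∈[0,s₁]} (A(s₁)*A(s₂) − A(s₂)*A(s₁)) ds₂) ds₁. Then the function t ↦ Y(t) − exp(Ω(t)) is O(|t|³) as t → 0 (IsBigO at the filter 𝓝 0). -/
open Asymptotics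

lemma isBigO_intervalIntegral {E : Type*} [NormedAddCommGroup E] [NormedSpace ℝ E]
    {g : ℝ → E} {k : ℕ}
    (h : g =O[nhds 0] fun t => |t| ^ k) :
    (fun t => ∫ s in (0:ℝ)..t, g s) =O[nhds 0] fun t => |t| ^ (k+1) := by
  rw [isBigO_iff] at h
  obtain ⟨C, hC⟩ := h
  obtain ⟨ε, hε, hball⟩ := Metric.eventually_nhds_iff_ball.mp hC
  rw [isBigO_iff]
  refine ⟨|C|, Metric.eventually_nhds_iff_ball.mpr ⟨ε, hε, fun t ht => ?_⟩⟩
  have ht' : |t| < ε := by simpa [Real.dist_eq] using ht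
  have key : ∀ s ∈ Set.uIoc (0:ℝ) t, ‖g s‖ ≤ |C| * |t| ^ k := by
    intro s hs
    have hs1 : |s| ≤ |t| := by
      rcases Set.mem_uIoc.mp hs with ⟨h1, h2⟩ | ⟨h1, h2⟩
      · rw [abs_of_pos h1]; exact h2.trans (le_abs_self t)
      · rw [abs_of_nonpos h2]; linarith [neg_le_abs t]
    have hsball : s ∈ Metric.ball (0:ℝ) ε := by
      simpa [Real.dist_eq] using lt_of_le_of_lt hs1 ht'
    calc ‖g s‖ ≤ C * ‖|s| ^ k‖ := hball s hsball
    _ ≤ |C| * |s| ^ k := by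
        rw [Real.norm_eq_abs, abs_pow, abs_abs]
        exact mul_le_mul_of_nonneg_right (le_abs_self C) (by positivity)
    _ ≤ |C| * |t| ^ k :=
        mul_le_mul_of_nonneg_left (pow_le_pow_left₀ (abs_nonneg s) hs1 k) (abs_nonneg C)
  calc ‖∫ s in (0:ℝ)..t, g s‖ ≤ |C| * |t| ^ k * |t - 0| :=
        intervalIntegral.norm_integral_le_of_norm_le_const key
  _ = |C| * |t| ^ (k+1) := by rw [sub_zero, pow_succ]; ring
  _ = |C| * ‖|t| ^ (k+1)‖ := by rw [Real.norm_eq_abs, abs_pow, abs_abs]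

lemma taylor2_isBigO {E : Type*} [NormedAddCommGroup E] [NormedSpace ℝ E] [CompleteSpace E]
    (f f' f'' : ℝ → E)
    (hf : ∀ t, HasDerivAt f (f' t) t) (hf' : ∀ t, HasDerivAt f' (f'' t) t)
    (hf''c : Continuous f'') (hf''d : DifferentiableAt ℝ f'' 0) :
    (fun t => f t - f 0 - t • f' 0 - (t^2/2) • f'' 0) =O[nhds 0] fun t => |t|^3 := by
  set g₂ : ℝ → E := fun t => f'' t - f'' 0 with hg₂def
  have hg₂ : g₂ =O[nhds 0] fun t => |t| ^ 1 := by
    refine hf''d.isBigO_sub.trans (isBigO_of_le _ fun t => ?_)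
    simp [Real.norm_eq_abs]
  set g₁ : ℝ → E := fun t => f' t - f' 0 - t • f'' 0 with hg₁def
  have hg₁d : ∀ t, HasDerivAt g₁ (g₂ t) t := by
    intro t
    have h1 : HasDerivAt (fun y : ℝ => y • f'' 0) ((1:ℝ) • f'' 0) t :=
      (hasDerivAt_id t).smul_const (f'' 0)
    simpa [hg₁def, hg₂def, one_smul, Pi.sub_def] using ((hf' t).sub_const (f' 0)).sub h1
  have hg₂c : Continuous g₂ := hf''c.sub continuous_const
  have hg₁eq : ∀ t, g₁ t = ∫ s in (0:ℝ)..t, g₂ s := by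
    intro t
    rw [intervalIntegral.integral_eq_sub_of_hasDerivAt (fun s _ => hg₁d s)
      (hg₂c.intervalIntegrable 0 t)]
    simp [hg₁def]
  have hg₁ : g₁ =O[nhds 0] fun t => |t| ^ 2 :=
    ((isBigO_intervalIntegral hg₂).congr (fun t => (hg₁eq t).symm) fun t => rfl)
  set g₀ : ℝ → E := fun t => f t - f 0 - t • f' 0 - (t^2/2) • f'' 0 with hg₀def
  have hg₀d : ∀ t, HasDerivAt g₀ (g₁ t) t := by
    intro t
    have h1 : HasDerivAt (fun y : ℝ => y • f' 0) ((1:ℝ) • f' 0) t :=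
      (hasDerivAt_id t).smul_const (f' 0)
    have h2 : HasDerivAt (fun y : ℝ => (y^2/2) • f'' 0) (t • f'' 0) t := by
      have h := ((hasDerivAt_pow 2 t).div_const 2).smul_const (f'' 0)
      convert h using 2
      push_cast; ring
    simpa [hg₀def, hg₁def, one_smul, Pi.sub_def] using ((((hf t).sub_const (f 0)).sub h1).sub h2)
  have hf'c : Continuous f' :=
    Differentiable.continuous (fun t => (hf' t).differentiableAt)
  have hg₁c : Continuous g₁ :=
    (hf'c.sub continuous_const).sub (continuous_id.smul continuous_const)
  have hg₀eq : ∀ t, g₀ t = ∫ s in (0:ℝ)..t, g₁ s := by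
    intro t
    rw [intervalIntegral.integral_eq_sub_of_hasDerivAt (fun s _ => hg₀d s)
      (hg₁c.intervalIntegrable 0 t)]
    simp [hg₀def]
  exact (isBigO_intervalIntegral hg₁).congr (fun t => (hg₀eq t).symm) fun t => by norm_num


lemma abs_le_abs_of_uIoc {s t : ℝ} (hs : s ∈ Set.uIoc (0:ℝ) t) : |s| ≤ |t| := by
  rcases Set.mem_uIoc.mp hs with ⟨h1, h2⟩ | ⟨h1, h2⟩
  · rw [abs_of_pos h1]; exact h2.trans (le_abs_self t)
  · rw [abs_of_nonpos h2]; linarith [neg_le_abs t]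

lemma comm_isBigO {E : Type*} [NormedRing E] [NormedAlgebra ℝ E]
    {A : ℝ → E} (hAc : Continuous A) (hAd : Differentiable ℝ A)
    (hA'c : Continuous (deriv A)) :
    (fun t => ∫ s in (0:ℝ)..t, (A t * A s - A s * A t)) =O[nhds 0] fun t => |t|^2 := by
  obtain ⟨K, hK⟩ := (isCompact_Icc (a := (-1:ℝ)) (b := 1)).exists_bound_of_continuousOn
    hA'c.continuousOn
  obtain ⟨Mb, hMb⟩ := (isCompact_Icc (a := (-1:ℝ)) (b := 1)).exists_bound_of_continuousOn
    hAc.continuousOn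
  have hK0 : 0 ≤ K := le_trans (norm_nonneg _) (hK 0 (by norm_num))
  have hMb0 : 0 ≤ Mb := le_trans (norm_nonneg _) (hMb 0 (by norm_num))
  have hlip : ∀ x ∈ Set.Icc (-1:ℝ) 1, ∀ y ∈ Set.Icc (-1:ℝ) 1, ‖A y - A x‖ ≤ K * ‖y - x‖ := by
    intro x hx y hy
    exact (convex_Icc (-1:ℝ) 1).norm_image_sub_le_of_norm_hasDerivWithin_le
      (fun z hz => (hAd z).hasDerivAt.hasDerivWithinAt) hK hx hy
  rw [isBigO_iff]
  refine ⟨2 * K * Mb * 2, Metric.eventually_nhds_iff_ball.mpr ⟨1, one_pos, fun t ht => ?_⟩⟩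
  have ht1 : |t| ≤ 1 := le_of_lt (by simpa [Real.dist_eq] using ht)
  have htmem : t ∈ Set.Icc (-1:ℝ) 1 := abs_le.mp ht1
  have key : ∀ s ∈ Set.uIoc (0:ℝ) t, ‖A t * A s - A s * A t‖ ≤ 2 * K * Mb * (2 * |t|) := by
    intro s hs
    have hs1 : |s| ≤ |t| := abs_le_abs_of_uIoc hs
    have hsmem : s ∈ Set.Icc (-1:ℝ) 1 := abs_le.mp (hs1.trans ht1)
    have hdiff : ‖A t - A s‖ ≤ K * (2 * |t|) := by
      refine (hlip s hsmem t htmem).trans ?_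
      have : ‖t - s‖ ≤ 2 * |t| := by
        rw [Real.norm_eq_abs]
        calc |t - s| ≤ |t| + |s| := abs_sub _ _
        _ ≤ 2 * |t| := by linarith
      exact mul_le_mul_of_nonneg_left this hK0
    have h1 : ‖A t * A s - A s * A t‖ ≤ ‖(A t - A s) * A s‖ + ‖A s * (A t - A s)‖ := by
      have : A t * A s - A s * A t = (A t - A s) * A s - A s * (A t - A s) := by
        noncomm_ring
      rw [this]; exact norm_sub_le _ _
    have h2 : ‖(A t - A s) * A s‖ ≤ K * (2 * |t|) * Mb :=
      (norm_mul_le _ _).trans (mul_le_mul hdiff (hMb s hsmem) (norm_nonneg _) (by positivity))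
    have h3 : ‖A s * (A t - A s)‖ ≤ Mb * (K * (2 * |t|)) :=
      (norm_mul_le _ _).trans (mul_le_mul (hMb s hsmem) hdiff (norm_nonneg _) hMb0)
    calc ‖A t * A s - A s * A t‖ ≤ K * (2*|t|) * Mb + Mb * (K * (2*|t|)) := by
          exact h1.trans (add_le_add h2 h3)
    _ = 2 * K * Mb * (2 * |t|) := by ring
  calc ‖∫ s in (0:ℝ)..t, (A t * A s - A s * A t)‖ ≤ 2 * K * Mb * (2 * |t|) * |t - 0| :=
        intervalIntegral.norm_integral_le_of_norm_le_const key
  _ = 2 * K * Mb * 2 * (|t| * |t|) := by rw [sub_zero]; ring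
  _ ≤ 2 * K * Mb * 2 * ‖|t| ^ 2‖ := by
      rw [Real.norm_eq_abs, abs_pow, abs_abs, sq]


lemma abs_pow_isBigO_abs_pow {j k : ℕ} (h : j ≤ k) :
    (fun t : ℝ => |t| ^ k) =O[nhds 0] fun t => |t| ^ j := by
  rw [isBigO_iff]
  refine ⟨1, Metric.eventually_nhds_iff_ball.mpr ⟨1, one_pos, fun t ht => ?_⟩⟩
  have ht1 : |t| ≤ 1 := le_of_lt (by simpa [Real.dist_eq] using ht)
  simp only [Real.norm_eq_abs, abs_pow, abs_abs, one_mul]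
  exact pow_le_pow_of_le_one (abs_nonneg t) ht1 h

lemma poly_smul_isBigO {E : Type*} [NormedAddCommGroup E] [NormedSpace ℝ E]
    (x : E) (c : ℝ) (k : ℕ) {l : Filter ℝ} :
    (fun t => (c * t ^ k) • x) =O[l] fun t => |t| ^ k := by
  rw [isBigO_iff]
  refine ⟨|c| * ‖x‖, Filter.Eventually.of_forall fun t => le_of_eq ?_⟩
  simp [norm_smul, abs_mul, abs_pow, Real.norm_eq_abs, abs_abs]
  ring

lemma half_sq_identity {E : Type*} [Ring E] [Module ℝ E] (a x : E) :
    (2⁻¹:ℝ) • (a * (a - x) + (a - x) * x) = (2⁻¹:ℝ) • (a * a) - (2⁻¹:ℝ) • (x * x) := by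
  have h : a * (a - x) + (a - x) * x = a * a - x * x := by noncomm_ring
  rw [h, smul_sub]

open scoped Matrix.Norms.L2Operator

/-- The first two terms of the Magnus expansion approximate the solution of `Y' = A(t) Y`,
`Y(0) = I` with local error `O(|t|³)` as `t → 0`. -/
theorem magnus_two_terms_error {n : ℕ} (A : ℝ → Matrix (Fin n) (Fin n) ℂ)
    (hA : ContDiff ℝ (⊤ : ℕ∞) A)
    (Y : ℝ → Matrix (Fin n) (Fin n) ℂ) (hY0 : Y 0 = 1)
    (hY : ∀ s, HasDerivAt Y (A s * Y s) s) :
    Asymptotics.IsBigO (nhds (0:ℝ))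
      (fun t : ℝ => Y t - NormedSpace.exp
        ((∫ s in (0:ℝ)..t, A s) +
          (1 / 2 : ℝ) • ∫ s₁ in (0:ℝ)..t, ∫ s₂ in (0:ℝ)..s₁,
            (A s₁ * A s₂ - A s₂ * A s₁)))
      (fun t : ℝ => |t| ^ 3) := by
  have hA' : ContDiff ℝ (⊤:ℕ∞) A := hA.of_le (by simp)
  obtain ⟨hAdiff, hAd⟩ := contDiff_infty_iff_deriv.mp hA'
  have hAc : Continuous A := hAdiff.continuous
  have hA'diff : Differentiable ℝ (deriv A) := hAd.differentiable (by simp)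
  have hA'c : Continuous (deriv A) := hA'diff.continuous
  set Ω : ℝ → Matrix (Fin n) (Fin n) ℂ := fun t =>
    (∫ s in (0:ℝ)..t, A s) +
      (1 / 2 : ℝ) • ∫ s₁ in (0:ℝ)..t, ∫ s₂ in (0:ℝ)..s₁,
        (A s₁ * A s₂ - A s₂ * A s₁) with hΩdef
  -- Taylor of Ω₁
  have hΩ₁d : ∀ t, HasDerivAt (fun u => ∫ s in (0:ℝ)..u, A s) (A t) t := fun t =>
    (hAc.integral_hasStrictDerivAt 0 t).hasDerivAt
  have hΩ₁T : (fun t => (∫ s in (0:ℝ)..t, A s) - t • A 0 - (t^2/2) • deriv A 0)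
      =O[nhds 0] fun t => |t|^3 := by
    have := taylor2_isBigO (fun u => ∫ s in (0:ℝ)..u, A s) A (deriv A) hΩ₁d
      (fun t => (hAdiff t).hasDerivAt) hA'c (hA'diff 0)
    simpa [intervalIntegral.integral_same] using this
  -- Taylor of Y
  have hYdiff : Differentiable ℝ Y := fun t => (hY t).differentiableAt
  have hYc : Continuous Y := hYdiff.continuous
  have hYT : (fun t => Y t - 1 - t • A 0 - (t^2/2) • (deriv A 0 + A 0 * A 0))
      =O[nhds 0] fun t => |t|^3 := by
    have hY2 : ∀ t, HasDerivAt (fun s => A s * Y s)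
        (deriv A t * Y t + A t * (A t * Y t)) t :=
      fun t => (hAdiff t).hasDerivAt.mul (hY t)
    have hc : Continuous fun t => deriv A t * Y t + A t * (A t * Y t) :=
      (hA'c.mul hYc).add (hAc.mul (hAc.mul hYc))
    have hd : DifferentiableAt ℝ (fun t => deriv A t * Y t + A t * (A t * Y t)) 0 :=
      ((hA'diff 0).mul (hYdiff 0)).add ((hAdiff 0).mul ((hAdiff 0).mul (hYdiff 0)))
    refine (taylor2_isBigO Y (fun s => A s * Y s)
      (fun t => deriv A t * Y t + A t * (A t * Y t)) hY hY2 hc hd).congr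
      (fun t => ?_) (fun _ => rfl)
    simp only [hY0, mul_one]
  -- Ω₂ is O(t³)
  have hg2 : (fun s₁ => ∫ s₂ in (0:ℝ)..s₁, (A s₁ * A s₂ - A s₂ * A s₁))
      =O[nhds 0] fun t => |t|^2 := comm_isBigO hAc hAdiff hA'c
  have hΩ₂ : (fun t => ∫ s₁ in (0:ℝ)..t, ∫ s₂ in (0:ℝ)..s₁, (A s₁ * A s₂ - A s₂ * A s₁))
      =O[nhds 0] fun t => |t|^3 :=
    (isBigO_intervalIntegral hg2).congr (fun _ => rfl) (fun t => by norm_num)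
  -- remainder of Ω beyond its degree-2 Taylor polynomial
  have hR : (fun t => Ω t - (t • A 0 + (t^2/2) • deriv A 0)) =O[nhds 0]
      fun t => |t|^3 := by
    refine (hΩ₁T.add (hΩ₂.const_smul_left (1/2 : ℝ))).congr (fun t => ?_) (fun _ => rfl)
    simp only [hΩdef, Pi.smul_apply]
    module
  -- Ω is O(|t|)
  have h21 : (fun t : ℝ => |t|^2) =O[nhds 0] fun t => |t| :=
    (abs_pow_isBigO_abs_pow (j := 1) (k := 2) one_le_two).congr
      (fun _ => rfl) (fun t => pow_one _)
  have h31 : (fun t : ℝ => |t|^3) =O[nhds 0] fun t => |t| :=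
    (abs_pow_isBigO_abs_pow (j := 1) (k := 3) (by norm_num)).congr
      (fun _ => rfl) (fun t => pow_one _)
  have h32 : (fun t : ℝ => |t|^3) =O[nhds 0] fun t => |t|^2 :=
    abs_pow_isBigO_abs_pow (by norm_num)
  have hxA : (fun t : ℝ => t • A 0) =O[nhds 0] fun t => |t| := by
    have := poly_smul_isBigO (A 0) 1 1 (l := nhds 0)
    simpa using this
  have hq2 : (fun t : ℝ => (t^2/2) • deriv A 0) =O[nhds 0] fun t => |t|^2 :=
    (poly_smul_isBigO (deriv A 0) 2⁻¹ 2 (l := nhds 0)).congr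
      (fun t => by ring_nf) (fun _ => rfl)
  have hxA' : (fun t : ℝ => (t^2/2) • deriv A 0) =O[nhds 0] fun t => |t| :=
    hq2.trans h21
  have hΩt : Ω =O[nhds 0] fun t => |t| := by
    refine (((hR.trans h31).add hxA).add hxA').congr (fun t => ?_) (fun _ => rfl)
    module
  have hΩ0 : Filter.Tendsto Ω (nhds 0) (nhds 0) :=
    hΩt.trans_tendsto (by simpa using (continuous_abs.tendsto (0:ℝ)))
  -- exponential remainder
  have hps : ∀ X : Matrix (Fin n) (Fin n) ℂ,
      (NormedSpace.expSeries ℂ (Matrix (Fin n) (Fin n) ℂ)).partialSum 3 X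
      = 1 + X + (2⁻¹:ℝ) • (X * X) := by
    intro X
    rw [FormalMultilinearSeries.partialSum]
    rw [Finset.sum_range_succ, Finset.sum_range_succ, Finset.sum_range_succ,
      Finset.sum_range_zero]
    simp only [NormedSpace.expSeries_apply_eq]
    rw [show ((2⁻¹:ℝ) • (X * X)) = ((2⁻¹:ℂ)) • (X * X) by
      rw [show ((2:ℂ))⁻¹ = ((2⁻¹:ℝ):ℂ) by norm_num, Complex.coe_smul]]
    norm_num [Nat.factorial, sq]
  have hexpO := (NormedSpace.exp_hasFPowerSeriesAt_zero (𝕂 := ℂ)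
    (𝔸 := Matrix (Fin n) (Fin n) ℂ)).isBigO_sub_partialSum_pow 3
  have hE2 : (fun t => NormedSpace.exp (Ω t) - (1 + Ω t + (2⁻¹:ℝ) • (Ω t * Ω t)))
      =O[nhds 0] fun t => |t|^3 := by
    have hcomp := hexpO.comp_tendsto hΩ0
    have hnorm : (fun t => ‖Ω t‖^3) =O[nhds 0] fun t => |t|^3 := hΩt.norm_left.pow 3
    refine (hcomp.trans hnorm).congr (fun t => ?_) (fun _ => rfl)
    simp [hps]
  -- quadratic term
  have hE4 : (fun t => (2⁻¹:ℝ) • (Ω t * Ω t) - (t^2/2) • (A 0 * A 0))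
      =O[nhds 0] fun t => |t|^3 := by
    have h1 : (fun t => Ω t - t • A 0) =O[nhds 0] fun t => |t|^2 := by
      refine ((hR.trans h32).add hq2).congr (fun t => ?_) (fun _ => rfl)
      module
    have hm1 : (fun t => Ω t * (Ω t - t • A 0)) =O[nhds 0] fun t => |t|^3 :=
      (hΩt.mul h1).congr (fun _ => rfl) (fun t => by ring)
    have hm2 : (fun t => (Ω t - t • A 0) * (t • A 0)) =O[nhds 0] fun t => |t|^3 :=
      (h1.mul hxA).congr (fun _ => rfl) (fun t => by ring)
    refine ((hm1.add hm2).const_smul_left (2⁻¹:ℝ)).congr (fun t => ?_) (fun _ => rfl)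
    simp only [Pi.smul_apply]
    rw [half_sq_identity]
    congr 1
    rw [smul_mul_assoc, mul_smul_comm, smul_smul, smul_smul]
    congr 1
    ring
  -- assemble
  have hfinal := ((hYT.sub hE2).sub hR).sub hE4
  refine hfinal.congr (fun t => ?_) (fun _ => rfl)
  show _ = Y t - NormedSpace.exp (Ω t)
  module
end

section
/- Let A : ℝ → Matrix (Fin n) (Fin n) ℂ be infinitely differentiable (ContDiff ℝ ⊤) and let Y : ℝ → Matrix (Fin n) (Fin n) ℂ satisfy Y(0) = 1 and HasDerivAt Y (A(s) * Y(s)) s for all s. For h ∈ ℝ set A₁(h) := A((1/2 − √3/6)·h), A₂(h) := A((1/2 + √3/6)·h), and Ω⁴(h) := (h/2) • (A₁(h) + A₂(h)) − (√3·h²/12) • (A₁(h)*A₂(h) − A₂(h)*A₁(h)). Then the function h ↦ Y(h) − exp(Ω⁴(h)) is O(|h|⁵) as h → 0 (IsBigO at the filter 𝓝 0); i.e., the fourth-order Gauss–Legendre Magnus integrator has local error of order h⁵. -/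
open Asymptotics Filter
open scoped Matrix.Norms.L2Operator

namespace MagnusGL4Aux

section Core
variable {F : Type*} [NormedAddCommGroup F] [NormedSpace ℝ F]


theorem isBigO_abs_pow_of_iteratedDeriv_eq_zero
    {F : Type*} [NormedAddCommGroup F] [NormedSpace ℝ F] :
    ∀ (k : ℕ) (f : ℝ → F), ContDiff ℝ (⊤ : ℕ∞) f → (∀ i ≤ k, iteratedDeriv i f 0 = 0) →
      f =O[nhds (0:ℝ)] fun h => |h| ^ (k+1) := by
  have hone : ((⊤ : ℕ∞) : WithTop ℕ∞) ≠ 0 := by simp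
  intro k
  induction k with
  | zero =>
    intro f hf h0
    have h1 : DifferentiableAt ℝ f 0 := (hf.differentiable hone).differentiableAt
    have h2 := h1.isBigO_sub
    have h00 : f 0 = 0 := by simpa using h0 0 le_rfl
    have h3 : f =O[nhds (0:ℝ)] fun x : ℝ => x := by simpa [h00] using h2
    simpa [pow_one] using isBigO_abs_right.mpr h3
  | succ k ih =>
    intro f hf h0
    have hdf : ContDiff ℝ (⊤ : ℕ∞) (deriv f) := (contDiff_infty_iff_deriv.1 hf).2
    have hdf0 : ∀ i ≤ k, iteratedDeriv i (deriv f) 0 = 0 := by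
      intro i hi
      have := h0 (i+1) (Nat.succ_le_succ hi)
      rwa [iteratedDeriv_succ'] at this
    obtain ⟨c, hc⟩ := isBigO_iff.1 (ih (deriv f) hdf hdf0)
    rw [Metric.eventually_nhds_iff] at hc
    obtain ⟨ε, hε, hcb⟩ := hc
    rw [isBigO_iff]
    refine ⟨|c|, Metric.eventually_nhds_iff.2 ⟨ε, hε, ?_⟩⟩
    intro h hh
    rw [Real.dist_eq, sub_zero] at hh
    have hd : ∀ x ∈ segment ℝ (0:ℝ) h, HasDerivWithinAt f (deriv f x) (segment ℝ (0:ℝ) h) x :=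
      fun x _ => ((hf.differentiable hone x).hasDerivAt).hasDerivWithinAt
    have hseg : ∀ x ∈ segment ℝ (0:ℝ) h, |x| ≤ |h| := by
      intro x hx
      rw [segment_eq_image'] at hx
      obtain ⟨θ, hθ, rfl⟩ := hx
      simp only [zero_add, sub_zero, smul_eq_mul, abs_mul]
      calc |θ| * |h| ≤ 1 * |h| := by
            apply mul_le_mul_of_nonneg_right _ (abs_nonneg h)
            rw [abs_le]; constructor <;> linarith [hθ.1, hθ.2]
        _ = |h| := one_mul _
    have hbound : ∀ x ∈ segment ℝ (0:ℝ) h, ‖deriv f x‖ ≤ |c| * |h| ^ (k+1) := by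
      intro x hx
      have hx' : dist x 0 < ε := by
        rw [Real.dist_eq, sub_zero]
        exact lt_of_le_of_lt (hseg x hx) hh
      calc ‖deriv f x‖ ≤ c * ‖|x| ^ (k+1)‖ := hcb hx'
        _ ≤ |c| * |x| ^ (k+1) := by
            rw [Real.norm_eq_abs, abs_of_nonneg (by positivity)]
            exact mul_le_mul_of_nonneg_right (le_abs_self c) (by positivity)
        _ ≤ |c| * |h| ^ (k+1) := by
            exact mul_le_mul_of_nonneg_left (pow_le_pow_left₀ (abs_nonneg x) (hseg x hx) _)
              (abs_nonneg c)
    have := (convex_segment (0:ℝ) h).norm_image_sub_le_of_norm_hasDerivWithin_le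
        hd hbound (left_mem_segment ℝ 0 h) (right_mem_segment ℝ 0 h)
    have h00 : f 0 = 0 := by simpa using h0 0 (Nat.zero_le _)
    rw [h00, sub_zero, sub_zero] at this
    calc ‖f h‖ ≤ |c| * |h| ^ (k+1) * ‖h‖ := this
      _ = |c| * ‖|h| ^ (k+1+1)‖ := by
          rw [Real.norm_eq_abs, Real.norm_eq_abs,
            abs_of_nonneg (by positivity : (0:ℝ) ≤ |h| ^ (k+1+1))]
          ring

end Core


section E5
variable {E : Type*} [NormedRing E] [NormedAlgebra ℝ E]

/-- degree-4 polynomial with matrix coefficients -/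
def P4 (u0 u1 u2 u3 u4 : E) : ℝ → E := fun h =>
  u0 + h • u1 + h ^ 2 • u2 + h ^ 3 • u3 + h ^ 4 • u4

/-- `f` has 4th-order expansion at `0` with the given coefficients. -/
def E5 (f : ℝ → E) (u0 u1 u2 u3 u4 : E) : Prop :=
  (fun h => f h - P4 u0 u1 u2 u3 u4 h) =O[nhds (0:ℝ)] fun h => |h| ^ 5

lemma abs_small : ∀ᶠ h : ℝ in nhds 0, |h| ≤ 1 := by
  filter_upwards [Metric.ball_mem_nhds (0:ℝ) one_pos] with h hh
  rw [Metric.mem_ball, Real.dist_eq, sub_zero] at hh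
  exact hh.le

lemma pow_smul_isBigO {m k : ℕ} (hk : k ≤ m) (u : E) :
    (fun h : ℝ => h ^ m • u) =O[nhds (0:ℝ)] fun h => |h| ^ k := by
  rw [isBigO_iff]
  refine ⟨‖u‖, ?_⟩
  filter_upwards [abs_small] with h hh
  rw [norm_smul, Real.norm_eq_abs, Real.norm_eq_abs, abs_pow,
    abs_of_nonneg (by positivity : (0:ℝ) ≤ |h| ^ k)]
  calc |h| ^ m * ‖u‖ ≤ |h| ^ k * ‖u‖ :=
        mul_le_mul_of_nonneg_right (pow_le_pow_of_le_one (abs_nonneg h) hh hk) (norm_nonneg u)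
    _ = ‖u‖ * |h| ^ k := mul_comm _ _

lemma abs_pow_isBigO {m k : ℕ} (hk : k ≤ m) :
    (fun h : ℝ => |h| ^ m) =O[nhds (0:ℝ)] fun h => |h| ^ k := by
  rw [isBigO_iff]
  refine ⟨1, ?_⟩
  filter_upwards [abs_small] with h hh
  rw [one_mul, Real.norm_eq_abs, Real.norm_eq_abs, abs_of_nonneg (by positivity : (0:ℝ) ≤ |h| ^ m),
    abs_of_nonneg (by positivity : (0:ℝ) ≤ |h| ^ k)]
  exact pow_le_pow_of_le_one (abs_nonneg h) hh hk

lemma P4_isBigO_one (u0 u1 u2 u3 u4 : E) :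
    (fun h : ℝ => P4 u0 u1 u2 u3 u4 h) =O[nhds (0:ℝ)] (fun _ => (1:ℝ)) := by
  have hc : Continuous (P4 u0 u1 u2 u3 u4) := by
    unfold P4; fun_prop
  exact (hc.tendsto 0).isBigO_one ℝ

lemma E5.isBigO_one {f : ℝ → E} {u0 u1 u2 u3 u4 : E} (hf : E5 f u0 u1 u2 u3 u4) :
    f =O[nhds (0:ℝ)] (fun _ => (1:ℝ)) := by
  have h1 : (fun h : ℝ => |h| ^ 5) =O[nhds (0:ℝ)] (fun _ => (1:ℝ)) := by
    have : Continuous (fun h : ℝ => |h| ^ 5) := by fun_prop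
    simpa using (this.tendsto 0).isBigO_one ℝ
  have := (hf.trans h1).add (P4_isBigO_one u0 u1 u2 u3 u4)
  simpa using this

lemma E5.congr_fun {f g : ℝ → E} {u0 u1 u2 u3 u4 : E} (hf : E5 f u0 u1 u2 u3 u4)
    (h : ∀ x, g x = f x) : E5 g u0 u1 u2 u3 u4 := by
  unfold E5 at *
  simpa [funext h] using hf

lemma E5.congr_coeff {f : ℝ → E} {u0 u1 u2 u3 u4 v0 v1 v2 v3 v4 : E}
    (hf : E5 f u0 u1 u2 u3 u4) (h0 : v0 = u0) (h1 : v1 = u1) (h2 : v2 = u2) (h3 : v3 = u3)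
    (h4 : v4 = u4) : E5 f v0 v1 v2 v3 v4 := by
  rw [h0, h1, h2, h3, h4]; exact hf

lemma E5.add {f g : ℝ → E} {u0 u1 u2 u3 u4 v0 v1 v2 v3 v4 : E}
    (hf : E5 f u0 u1 u2 u3 u4) (hg : E5 g v0 v1 v2 v3 v4) :
    E5 (fun h => f h + g h) (u0+v0) (u1+v1) (u2+v2) (u3+v3) (u4+v4) := by
  have key : ∀ h : ℝ, f h + g h - P4 (u0+v0) (u1+v1) (u2+v2) (u3+v3) (u4+v4) h
      = (f h - P4 u0 u1 u2 u3 u4 h) + (g h - P4 v0 v1 v2 v3 v4 h) := by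
    intro h; unfold P4; module
  unfold E5
  simpa [key] using Asymptotics.IsBigO.add hf hg

lemma E5.sub {f g : ℝ → E} {u0 u1 u2 u3 u4 v0 v1 v2 v3 v4 : E}
    (hf : E5 f u0 u1 u2 u3 u4) (hg : E5 g v0 v1 v2 v3 v4) :
    E5 (fun h => f h - g h) (u0-v0) (u1-v1) (u2-v2) (u3-v3) (u4-v4) := by
  have key : ∀ h : ℝ, f h - g h - P4 (u0-v0) (u1-v1) (u2-v2) (u3-v3) (u4-v4) h
      = (f h - P4 u0 u1 u2 u3 u4 h) - (g h - P4 v0 v1 v2 v3 v4 h) := by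
    intro h; unfold P4; module
  unfold E5
  simpa [key] using Asymptotics.IsBigO.sub hf hg

lemma E5.rsmul {f : ℝ → E} {u0 u1 u2 u3 u4 : E} (r : ℝ) (hf : E5 f u0 u1 u2 u3 u4) :
    E5 (fun h => r • f h) (r•u0) (r•u1) (r•u2) (r•u3) (r•u4) := by
  have key : ∀ h : ℝ, r • f h - P4 (r•u0) (r•u1) (r•u2) (r•u3) (r•u4) h
      = r • (f h - P4 u0 u1 u2 u3 u4 h) := by
    intro h; unfold P4; module
  unfold E5
  exact (hf.const_smul_left r).congr_left (fun h => (key h).symm)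

lemma E5.hsmul {f : ℝ → E} {u0 u1 u2 u3 u4 : E} (hf : E5 f u0 u1 u2 u3 u4) :
    E5 (fun h => h • f h) 0 u0 u1 u2 u3 := by
  have key : ∀ h : ℝ, h • f h - P4 0 u0 u1 u2 u3 h
      = h • (f h - P4 u0 u1 u2 u3 u4 h) + h ^ 5 • u4 := by
    intro h; unfold P4; module
  have t1 : (fun h : ℝ => h • (f h - P4 u0 u1 u2 u3 u4 h)) =O[nhds (0:ℝ)]
      fun h => |h| ^ 5 := by
    have hid : (fun h : ℝ => h) =O[nhds (0:ℝ)] (fun _ => (1:ℝ)) := by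
      simpa using (continuous_id.tendsto (0:ℝ)).isBigO_one ℝ
    have := Asymptotics.IsBigO.smul hid hf
    simpa using this
  have t2 := pow_smul_isBigO (le_refl 5) u4
  unfold E5
  simpa [key] using Asymptotics.IsBigO.add t1 t2

lemma E5.const (u : E) : E5 (fun _ => u) u 0 0 0 0 := by
  unfold E5 P4
  simpa using isBigO_zero _ _

lemma E5.mul {f g : ℝ → E} {u0 u1 u2 u3 u4 v0 v1 v2 v3 v4 : E}
    (hf : E5 f u0 u1 u2 u3 u4) (hg : E5 g v0 v1 v2 v3 v4) :
    E5 (fun h => f h * g h) (u0*v0) (u0*v1+u1*v0) (u0*v2+u1*v1+u2*v0)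
      (u0*v3+u1*v2+u2*v1+u3*v0) (u0*v4+u1*v3+u2*v2+u3*v1+u4*v0) := by
  set Pu := P4 u0 u1 u2 u3 u4
  set Pv := P4 v0 v1 v2 v3 v4
  set Pw := P4 (u0*v0) (u0*v1+u1*v0) (u0*v2+u1*v1+u2*v0) (u0*v3+u1*v2+u2*v1+u3*v0)
    (u0*v4+u1*v3+u2*v2+u3*v1+u4*v0)
  have key : ∀ h : ℝ, f h * g h - Pw h
      = (f h - Pu h) * g h + Pu h * (g h - Pv h) + (Pu h * Pv h - Pw h) := by
    intro h; noncomm_ring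
  have poly : ∀ h : ℝ, Pu h * Pv h - Pw h
      = h^5 • (u1*v4+u2*v3+u3*v2+u4*v1) + h^6 • (u2*v4+u3*v3+u4*v2)
        + h^7 • (u3*v4+u4*v3) + h^8 • (u4*v4) := by
    intro h
    show P4 u0 u1 u2 u3 u4 h * P4 v0 v1 v2 v3 v4 h - P4 _ _ _ _ _ h = _
    unfold P4
    simp only [add_mul, mul_add, smul_mul_assoc, mul_smul_comm, smul_smul, smul_add]
    module
  have t1 : (fun h : ℝ => (f h - Pu h) * g h) =O[nhds (0:ℝ)] fun h => |h| ^ 5 := by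
    have := Asymptotics.IsBigO.mul hf hg.isBigO_one
    simpa using this
  have t2 : (fun h : ℝ => Pu h * (g h - Pv h)) =O[nhds (0:ℝ)] fun h => |h| ^ 5 := by
    have := Asymptotics.IsBigO.mul (P4_isBigO_one u0 u1 u2 u3 u4) hg
    simpa using this
  have t3 : (fun h : ℝ => Pu h * Pv h - Pw h) =O[nhds (0:ℝ)] fun h => |h| ^ 5 := by
    have e : (fun h : ℝ => Pu h * Pv h - Pw h) = fun h : ℝ =>
        h^5 • (u1*v4+u2*v3+u3*v2+u4*v1) + h^6 • (u2*v4+u3*v3+u4*v2)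
          + h^7 • (u3*v4+u4*v3) + h^8 • (u4*v4) := funext poly
    rw [e]
    exact (((pow_smul_isBigO (by norm_num : 5 ≤ 5) (u1*v4+u2*v3+u3*v2+u4*v1)).add
      (pow_smul_isBigO (by norm_num : 5 ≤ 6) (u2*v4+u3*v3+u4*v2))).add
      (pow_smul_isBigO (by norm_num : 5 ≤ 7) (u3*v4+u4*v3))).add
      (pow_smul_isBigO (by norm_num : 5 ≤ 8) (u4*v4))
  unfold E5
  exact (Asymptotics.IsBigO.add (Asymptotics.IsBigO.add t1 t2) t3).congr_left (fun h => (key h).symm)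

end E5


section
variable {E : Type*} [NormedRing E] [NormedAlgebra ℝ E]

lemma contDiff_P4 (u0 u1 u2 u3 u4 : E) : ContDiff ℝ (⊤:ℕ∞) (P4 u0 u1 u2 u3 u4) := by
  unfold P4; fun_prop

lemma hasDerivAt_P4 (u0 u1 u2 u3 u4 : E) (t : ℝ) :
    HasDerivAt (P4 u0 u1 u2 u3 u4)
      (P4 u1 ((2:ℝ)•u2) ((3:ℝ)•u3) ((4:ℝ)•u4) 0 t) t := by
  have h := ((((hasDerivAt_const t u0).add ((hasDerivAt_id t).smul_const u1)).add
    ((hasDerivAt_pow 2 t).smul_const u2)).add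
    ((hasDerivAt_pow 3 t).smul_const u3)).add
    ((hasDerivAt_pow 4 t).smul_const u4)
  refine HasDerivAt.congr_deriv h ?_
  unfold P4
  match_scalars <;> push_cast <;> ring

lemma P4_zero (u0 u1 u2 u3 u4 : E) : P4 u0 u1 u2 u3 u4 0 = u0 := by simp [P4]


lemma E5_of_smooth {f f1 f2 f3 f4 : ℝ → E} (hf : ContDiff ℝ (⊤:ℕ∞) f)
    (h1 : ∀ t, HasDerivAt f (f1 t) t) (h2 : ∀ t, HasDerivAt f1 (f2 t) t)
    (h3 : ∀ t, HasDerivAt f2 (f3 t) t) (h4 : ∀ t, HasDerivAt f3 (f4 t) t) :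
    E5 f (f 0) (f1 0) ((2⁻¹:ℝ) • f2 0) ((6⁻¹:ℝ) • f3 0) ((24⁻¹:ℝ) • f4 0) := by
  set c2 : E := (2⁻¹:ℝ) • f2 0 with hc2
  set c3 : E := (6⁻¹:ℝ) • f3 0 with hc3
  set c4 : E := (24⁻¹:ℝ) • f4 0 with hc4
  set g : ℝ → E := fun t => f t - P4 (f 0) (f1 0) c2 c3 c4 t with hg
  have hgc : ContDiff ℝ (⊤:ℕ∞) g := hf.sub (contDiff_P4 _ _ _ _ _)
  have hd1 : deriv g = fun t => f1 t - P4 (f1 0) ((2:ℝ)•c2) ((3:ℝ)•c3) ((4:ℝ)•c4) 0 t :=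
    funext fun t => ((h1 t).sub (hasDerivAt_P4 _ _ _ _ _ t)).deriv
  have hd2 : deriv (deriv g) = fun t =>
      f2 t - P4 ((2:ℝ)•c2) ((2:ℝ)•((3:ℝ)•c3)) ((3:ℝ)•((4:ℝ)•c4)) ((4:ℝ)•(0:E)) 0 t := by
    rw [hd1]
    exact funext fun t => ((h2 t).sub (hasDerivAt_P4 _ _ _ _ _ t)).deriv
  have hd3 : deriv (deriv (deriv g)) = fun t =>
      f3 t - P4 ((2:ℝ)•((3:ℝ)•c3)) ((2:ℝ)•((3:ℝ)•((4:ℝ)•c4))) ((3:ℝ)•((4:ℝ)•(0:E)))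
        ((4:ℝ)•(0:E)) 0 t := by
    rw [hd2]
    exact funext fun t => ((h3 t).sub (hasDerivAt_P4 _ _ _ _ _ t)).deriv
  have hd4 : deriv (deriv (deriv (deriv g))) = fun t =>
      f4 t - P4 ((2:ℝ)•((3:ℝ)•((4:ℝ)•c4))) ((2:ℝ)•((3:ℝ)•((4:ℝ)•(0:E))))
        ((3:ℝ)•((4:ℝ)•(0:E))) ((4:ℝ)•(0:E)) 0 t := by
    rw [hd3]
    exact funext fun t => ((h4 t).sub (hasDerivAt_P4 _ _ _ _ _ t)).deriv
  have hvan : ∀ i ≤ 4, iteratedDeriv i g 0 = 0 := by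
    intro i hi
    interval_cases i
    · simp [hg, P4]
    · rw [iteratedDeriv_one, hd1]; simp [P4]
    · rw [show (2:ℕ) = 1+1 from rfl, iteratedDeriv_succ, iteratedDeriv_one, hd1, ← hd1, hd2]
      simp [P4, hc2, smul_smul]
      try norm_num
    · rw [show (3:ℕ) = 1+1+1 from rfl, iteratedDeriv_succ, iteratedDeriv_succ,
        iteratedDeriv_one, hd3]
      simp [P4, hc3, smul_smul]
      try norm_num
    · rw [show (4:ℕ) = 1+1+1+1 from rfl, iteratedDeriv_succ, iteratedDeriv_succ,
        iteratedDeriv_succ, iteratedDeriv_one, hd4]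
      simp [P4, hc4, smul_smul]
      try norm_num
  exact isBigO_abs_pow_of_iteratedDeriv_eq_zero 4 g hgc hvan
end


section MoreAux
variable {E : Type*} [NormedRing E] [NormedAlgebra ℝ E]

lemma E5.out {f : ℝ → E} {u0 u1 u2 u3 u4 : E} (hf : E5 f u0 u1 u2 u3 u4) :
    (fun h => f h - P4 u0 u1 u2 u3 u4 h) =O[nhds (0:ℝ)] fun h => |h| ^ 5 := hf

lemma E5.comp_mul_left {f : ℝ → E} {u0 u1 u2 u3 u4 : E} (c : ℝ) (hf : E5 f u0 u1 u2 u3 u4) :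
    E5 (fun h => f (c*h)) u0 (c•u1) ((c^2)•u2) ((c^3)•u3) ((c^4)•u4) := by
  have htend : Filter.Tendsto (fun h : ℝ => c*h) (nhds 0) (nhds 0) := by
    exact ((continuous_const.mul continuous_id :
      Continuous fun h : ℝ => c * h).tendsto' 0 0 (by simp))
  have h1 := Asymptotics.IsBigO.comp_tendsto hf htend
  have h2 : (fun h : ℝ => |c*h|^5) =O[nhds (0:ℝ)] fun h => |h|^5 := by
    rw [isBigO_iff]
    refine ⟨|c|^5, ?_⟩
    filter_upwards with h
    calc ‖|c*h|^5‖ = |c|^5*|h|^5 := by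
          rw [Real.norm_eq_abs, abs_of_nonneg (by positivity), abs_mul, mul_pow]
      _ ≤ |c|^5 * ‖|h|^5‖ := by
          have e : ‖|h|^5‖ = |h|^5 := by
            rw [Real.norm_eq_abs]; exact abs_of_nonneg (by positivity)
          rw [e]
  have h3 := h1.trans h2
  have h4 : ∀ h : ℝ, P4 u0 u1 u2 u3 u4 (c*h)
      = P4 u0 (c•u1) ((c^2)•u2) ((c^3)•u3) ((c^4)•u4) h := by
    intro h; unfold P4; match_scalars <;> ring
  unfold E5
  simpa [h4, Function.comp_def] using h3

lemma E5.isBigO_abs {f : ℝ → E} {u1 u2 u3 u4 : E} (hf : E5 f 0 u1 u2 u3 u4) :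
    f =O[nhds (0:ℝ)] fun h => |h| := by
  have h1 : (fun h => f h - P4 (0:E) u1 u2 u3 u4 h) =O[nhds (0:ℝ)] fun h => |h|^1 :=
    hf.out.trans (abs_pow_isBigO (by norm_num : 1 ≤ 5))
  have e : (fun h : ℝ => P4 (0:E) u1 u2 u3 u4 h)
      = fun h => h^1 • u1 + (h^2 • u2 + (h^3 • u3 + h^4 • u4)) := by
    funext h; unfold P4; module
  have h2 : (fun h : ℝ => P4 (0:E) u1 u2 u3 u4 h) =O[nhds (0:ℝ)] fun h => |h|^1 := by
    rw [e]
    exact (pow_smul_isBigO le_rfl u1).add ((pow_smul_isBigO (by norm_num) u2).add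
      ((pow_smul_isBigO (by norm_num) u3).add (pow_smul_isBigO (by norm_num) u4)))
  have h3 := h1.add h2
  simpa [pow_one] using h3

lemma isBigO_norm_pow_abs {f : ℝ → E} (hf : f =O[nhds (0:ℝ)] fun h => |h|) :
    (fun h => ‖f h‖ ^ 5) =O[nhds (0:ℝ)] fun h => |h| ^ 5 := by
  obtain ⟨c, hc⟩ := isBigO_iff.1 hf
  rw [isBigO_iff]
  refine ⟨|c| ^ 5, ?_⟩
  filter_upwards [hc] with h hh
  have h1 : ‖f h‖ ≤ |c| * |h| := by
    calc ‖f h‖ ≤ c * ‖|h|‖ := hh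
      _ ≤ |c| * |h| := by
          rw [Real.norm_eq_abs, abs_abs]
          exact mul_le_mul_of_nonneg_right (le_abs_self c) (abs_nonneg h)
  calc ‖‖f h‖ ^ 5‖ = ‖f h‖ ^ 5 := by
        rw [Real.norm_eq_abs]; exact abs_of_nonneg (by positivity)
    _ ≤ (|c| * |h|) ^ 5 := pow_le_pow_left₀ (norm_nonneg _) h1 5
    _ = |c| ^ 5 * ‖|h| ^ 5‖ := by
        rw [Real.norm_eq_abs, abs_of_nonneg (by positivity : (0:ℝ) ≤ |h|^5), mul_pow]

end MoreAux


lemma partialSum_exp_five {n : ℕ} (X : Matrix (Fin n) (Fin n) ℂ) :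
    (NormedSpace.expSeries ℂ (Matrix (Fin n) (Fin n) ℂ)).partialSum 5 X
      = 1 + X + (2⁻¹:ℝ) • (X*X) + (6⁻¹:ℝ) • (X*X*X) + (24⁻¹:ℝ) • (X*X*X*X) := by
  have e : ∀ (r : ℝ) (x : Matrix (Fin n) (Fin n) ℂ), ((r:ℂ)) • x = r • x := fun r x =>
    algebraMap_smul ℂ r x
  simp only [FormalMultilinearSeries.partialSum, Finset.sum_range_succ,
    NormedSpace.expSeries_apply_eq, Finset.sum_range_zero]
  rw [← e 2⁻¹ (X*X), ← e 6⁻¹ (X*X*X), ← e 24⁻¹ (X*X*X*X)]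
  push_cast
  norm_num [pow_succ, pow_zero, Nat.factorial]

end MagnusGL4Aux
open MagnusGL4Aux

/-- The fourth-order Gauss–Legendre Magnus integrator
`Ω⁴(h) = (h/2)(A₁+A₂) − (√3 h²/12)[A₁, A₂]`, with `A₁ = A((1/2−√3/6)h)`,
`A₂ = A((1/2+√3/6)h)`, has local error `O(|h|⁵)` for `Y' = A(t) Y`, `Y(0) = I`. -/
theorem magnus_gl4_local_error {n : ℕ} (A : ℝ → Matrix (Fin n) (Fin n) ℂ)
    (hA : ContDiff ℝ (⊤ : ℕ∞) A)
    (Y : ℝ → Matrix (Fin n) (Fin n) ℂ) (hY0 : Y 0 = 1)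
    (hY : ∀ s, HasDerivAt Y (A s * Y s) s) :
    Asymptotics.IsBigO (nhds (0:ℝ))
      (fun h : ℝ => Y h - NormedSpace.exp
        ((h / 2) • (A ((1 / 2 - Real.sqrt 3 / 6) * h) + A ((1 / 2 + Real.sqrt 3 / 6) * h)) -
          (Real.sqrt 3 * h ^ 2 / 12) •
            (A ((1 / 2 - Real.sqrt 3 / 6) * h) * A ((1 / 2 + Real.sqrt 3 / 6) * h) -
              A ((1 / 2 + Real.sqrt 3 / 6) * h) * A ((1 / 2 - Real.sqrt 3 / 6) * h))))
      (fun h : ℝ => |h| ^ 5) := by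
  have hone : ((⊤ : ℕ∞) : WithTop ℕ∞) ≠ 0 := by simp
  set s3 : ℝ := Real.sqrt 3 with hs3def
  have hs2 : s3^2 = 3 := Real.sq_sqrt (by norm_num)
  have hs3p : s3^3 = 3*s3 := by rw [pow_succ, hs2]
  have hs4 : s3^4 = 9 := by
    have e : s3^4 = (s3^2)^2 := by ring
    rw [e, hs2]; norm_num
  have hA8 : ContDiff ℝ (⊤:ℕ∞) A := hA.of_le (by simp)
  have hA1 : ContDiff ℝ (⊤:ℕ∞) (deriv A) := (contDiff_infty_iff_deriv.1 hA8).2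
  have hA2 : ContDiff ℝ (⊤:ℕ∞) (deriv (deriv A)) := (contDiff_infty_iff_deriv.1 hA1).2
  have hA3 : ContDiff ℝ (⊤:ℕ∞) (deriv (deriv (deriv A))) := (contDiff_infty_iff_deriv.1 hA2).2
  have hdA : ∀ t, HasDerivAt A (deriv A t) t := fun t => (hA8.differentiable hone t).hasDerivAt
  have hdA1 : ∀ t, HasDerivAt (deriv A) (deriv (deriv A) t) t :=
    fun t => (hA1.differentiable hone t).hasDerivAt
  have hdA2 : ∀ t, HasDerivAt (deriv (deriv A)) (deriv (deriv (deriv A)) t) t :=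
    fun t => (hA2.differentiable hone t).hasDerivAt
  have hdA3 : ∀ t, HasDerivAt (deriv (deriv (deriv A))) (deriv (deriv (deriv (deriv A))) t) t :=
    fun t => (hA3.differentiable hone t).hasDerivAt
  have hTA := E5_of_smooth hA8 hdA hdA1 hdA2 hdA3
  have hG1 := hTA.comp_mul_left (1 / 2 - s3 / 6)
  have hG2 := hTA.comp_mul_left (1 / 2 + s3 / 6)
  -- the Magnus integrand
  have hsum := hG1.add hG2
  have hcomm := (hG1.mul hG2).sub (hG2.mul hG1)
  have hterm1 := E5.congr_fun ((hsum.rsmul 2⁻¹).hsmul)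
    (g := fun h : ℝ => (h / 2) • (A ((1 / 2 - s3 / 6) * h) + A ((1 / 2 + s3 / 6) * h)))
    (fun x => by match_scalars <;> ring)
  have hterm2 := E5.congr_fun (((hcomm.rsmul (s3/12)).hsmul).hsmul)
    (g := fun h : ℝ => (s3 * h ^ 2 / 12) •
      (A ((1 / 2 - s3 / 6) * h) * A ((1 / 2 + s3 / 6) * h) -
        A ((1 / 2 + s3 / 6) * h) * A ((1 / 2 - s3 / 6) * h)))
    (fun x => by match_scalars <;> ring)
  have hΩmach := hterm1.sub hterm2
  have hΩ : E5 (fun h : ℝ =>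
      (h / 2) • (A ((1 / 2 - s3 / 6) * h) + A ((1 / 2 + s3 / 6) * h)) -
        (s3 * h ^ 2 / 12) •
          (A ((1 / 2 - s3 / 6) * h) * A ((1 / 2 + s3 / 6) * h) -
            A ((1 / 2 + s3 / 6) * h) * A ((1 / 2 - s3 / 6) * h)))
      0 (A 0) ((2⁻¹:ℝ) • deriv A 0)
      ((6⁻¹:ℝ) • deriv (deriv A) 0 - (12⁻¹:ℝ) • (A 0 * deriv A 0 - deriv A 0 * A 0))
      ((24⁻¹:ℝ) • deriv (deriv (deriv A)) 0
        - (24⁻¹:ℝ) • (A 0 * deriv (deriv A) 0 - deriv (deriv A) 0 * A 0)) := by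
    refine E5.congr_coeff hΩmach ?_ ?_ ?_ ?_ ?_ <;>
    · simp only [smul_add, smul_sub, smul_smul, mul_add, add_mul, mul_sub, sub_mul,
        smul_mul_assoc, mul_smul_comm, mul_zero, zero_mul, add_zero, zero_add, smul_zero,
        zero_smul, sub_zero, zero_sub, mul_one, one_mul]
      try (match_scalars <;> (try ring_nf) <;> (try linarith [hs2, hs3p, hs4]))
  -- powers of Ω and the exponential partial sum
  have hq2 := hΩ.mul hΩ
  have hq3 := hq2.mul hΩ
  have hq4 := hq3.mul hΩ
  have hpoly := ((((E5.const ((1:Matrix (Fin n) (Fin n) ℂ))).add hΩ).add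
    (hq2.rsmul (2⁻¹:ℝ))).add (hq3.rsmul (6⁻¹:ℝ))).add (hq4.rsmul (24⁻¹:ℝ))
  have hSclean : E5 (fun h : ℝ =>
      (NormedSpace.expSeries ℂ (Matrix (Fin n) (Fin n) ℂ)).partialSum 5
        ((fun h : ℝ =>
      (h / 2) • (A ((1 / 2 - s3 / 6) * h) + A ((1 / 2 + s3 / 6) * h)) -
        (s3 * h ^ 2 / 12) •
          (A ((1 / 2 - s3 / 6) * h) * A ((1 / 2 + s3 / 6) * h) -
            A ((1 / 2 + s3 / 6) * h) * A ((1 / 2 - s3 / 6) * h))) h))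
      1 (A 0) ((2⁻¹:ℝ) • deriv A 0 + (2⁻¹:ℝ) • (A 0 * A 0)) ((6⁻¹:ℝ) • deriv (deriv A) 0 + (6⁻¹:ℝ) • (A 0 * deriv A 0) + (3⁻¹:ℝ) • (deriv A 0 * A 0) + (6⁻¹:ℝ) • (A 0 * (A 0 * A 0))) ((24⁻¹:ℝ) • deriv (deriv (deriv A)) 0 + (24⁻¹:ℝ) • (A 0 * deriv (deriv A) 0) + (8⁻¹:ℝ) • (deriv (deriv A) 0 * A 0) + (8⁻¹:ℝ) • (deriv A 0 * deriv A 0) + (24⁻¹:ℝ) • (A 0 * (A 0 * deriv A 0)) + (12⁻¹:ℝ) • (A 0 * (deriv A 0 * A 0)) + (8⁻¹:ℝ) • (deriv A 0 * (A 0 * A 0)) + (24⁻¹:ℝ) • (A 0 * (A 0 * (A 0 * A 0)))) := by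
    refine E5.congr_coeff (E5.congr_fun hpoly (fun x => ?_)) ?_ ?_ ?_ ?_ ?_
    · rw [partialSum_exp_five]
    all_goals
      simp only [mul_zero, zero_mul, add_zero, zero_add, smul_zero, zero_smul, sub_zero,
        mul_one, one_mul, smul_add, smul_sub, smul_smul, mul_add, add_mul, mul_sub, sub_mul,
        smul_mul_assoc, mul_smul_comm, mul_assoc]
      try (match_scalars <;> try ring)
  -- exponential remainder
  have hexp0 := (NormedSpace.hasFPowerSeriesAt_exp_zero_of_radius_pos
    (NormedSpace.expSeries_radius_pos ℂ (Matrix (Fin n) (Fin n) ℂ))).isBigO_sub_partialSum_pow 5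
  have hAc : Continuous A := hA8.continuous
  have hΩcont : Continuous (fun h : ℝ =>
      (h / 2) • (A ((1 / 2 - s3 / 6) * h) + A ((1 / 2 + s3 / 6) * h)) -
        (s3 * h ^ 2 / 12) •
          (A ((1 / 2 - s3 / 6) * h) * A ((1 / 2 + s3 / 6) * h) -
            A ((1 / 2 + s3 / 6) * h) * A ((1 / 2 - s3 / 6) * h))) := by fun_prop
  have hΩ00 : (fun h : ℝ =>
      (h / 2) • (A ((1 / 2 - s3 / 6) * h) + A ((1 / 2 + s3 / 6) * h)) -
        (s3 * h ^ 2 / 12) •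
          (A ((1 / 2 - s3 / 6) * h) * A ((1 / 2 + s3 / 6) * h) -
            A ((1 / 2 + s3 / 6) * h) * A ((1 / 2 - s3 / 6) * h))) 0 = 0 := by norm_num
  have htendΩ := hΩcont.tendsto' 0 0 hΩ00
  have hcomp := hexp0.comp_tendsto htendΩ
  have hrem : (fun h : ℝ => NormedSpace.exp ((fun h : ℝ =>
      (h / 2) • (A ((1 / 2 - s3 / 6) * h) + A ((1 / 2 + s3 / 6) * h)) -
        (s3 * h ^ 2 / 12) •
          (A ((1 / 2 - s3 / 6) * h) * A ((1 / 2 + s3 / 6) * h) -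
            A ((1 / 2 + s3 / 6) * h) * A ((1 / 2 - s3 / 6) * h))) h)
      - (NormedSpace.expSeries ℂ (Matrix (Fin n) (Fin n) ℂ)).partialSum 5 ((fun h : ℝ =>
      (h / 2) • (A ((1 / 2 - s3 / 6) * h) + A ((1 / 2 + s3 / 6) * h)) -
        (s3 * h ^ 2 / 12) •
          (A ((1 / 2 - s3 / 6) * h) * A ((1 / 2 + s3 / 6) * h) -
            A ((1 / 2 + s3 / 6) * h) * A ((1 / 2 - s3 / 6) * h))) h))
      =O[nhds (0:ℝ)] fun h => |h|^5 := by
    have h2 := hcomp.trans (isBigO_norm_pow_abs hΩ.isBigO_abs)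
    simpa [Function.comp_def] using h2
  have hexpE5 : E5 (fun h : ℝ => NormedSpace.exp ((fun h : ℝ =>
      (h / 2) • (A ((1 / 2 - s3 / 6) * h) + A ((1 / 2 + s3 / 6) * h)) -
        (s3 * h ^ 2 / 12) •
          (A ((1 / 2 - s3 / 6) * h) * A ((1 / 2 + s3 / 6) * h) -
            A ((1 / 2 + s3 / 6) * h) * A ((1 / 2 - s3 / 6) * h))) h))
      1 (A 0) ((2⁻¹:ℝ) • deriv A 0 + (2⁻¹:ℝ) • (A 0 * A 0)) ((6⁻¹:ℝ) • deriv (deriv A) 0 + (6⁻¹:ℝ) • (A 0 * deriv A 0) + (3⁻¹:ℝ) • (deriv A 0 * A 0) + (6⁻¹:ℝ) • (A 0 * (A 0 * A 0))) ((24⁻¹:ℝ) • deriv (deriv (deriv A)) 0 + (24⁻¹:ℝ) • (A 0 * deriv (deriv A) 0) + (8⁻¹:ℝ) • (deriv (deriv A) 0 * A 0) + (8⁻¹:ℝ) • (deriv A 0 * deriv A 0) + (24⁻¹:ℝ) • (A 0 * (A 0 * deriv A 0)) + (12⁻¹:ℝ) • (A 0 * (deriv A 0 * A 0)) + (8⁻¹:ℝ)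 • (deriv A 0 * (A 0 * A 0)) + (24⁻¹:ℝ) • (A 0 * (A 0 * (A 0 * A 0)))) := by
    have h3 := hrem.add hSclean.out
    show (fun h => _ - P4 _ _ _ _ _ h) =O[nhds (0:ℝ)] fun h => |h|^5
    simpa [sub_add_sub_cancel] using h3
  -- the solution side
  have hYd : Differentiable ℝ Y := fun s => (hY s).differentiableAt
  have hderivY : deriv Y = fun s => A s * Y s := funext fun s => (hY s).deriv
  have hYn : ∀ m : ℕ, ContDiff ℝ (m : WithTop ℕ∞) Y := by
    intro m
    induction m with
    | zero => exact contDiff_zero.2 hYd.continuous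
    | succ m ih =>
      have e : ((m+1 : ℕ) : WithTop ℕ∞) = (m : WithTop ℕ∞) + 1 := by push_cast; rfl
      rw [e, contDiff_succ_iff_deriv]
      refine ⟨hYd, ?_, ?_⟩
      · intro habs; exact absurd habs (by simp)
      · rw [hderivY]; exact (hA.of_le (by exact_mod_cast le_top)).mul ih
  have hY8 : ContDiff ℝ (⊤:ℕ∞) Y := contDiff_infty.2 hYn
  have hdY1 : ∀ s, HasDerivAt (fun s => A s * Y s)
      (deriv A s * Y s + A s * (A s * Y s)) s := fun s => (hdA s).mul (hY s)
  have hdY2 : ∀ s, HasDerivAt (fun s => deriv A s * Y s + A s * (A s * Y s))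
      ((deriv (deriv A) s * Y s + deriv A s * (A s * Y s)) +
        (deriv A s * (A s * Y s) + A s * (deriv A s * Y s + A s * (A s * Y s)))) s :=
    fun s => ((hdA1 s).mul (hY s)).add ((hdA s).mul (hdY1 s))
  have hdY3 : ∀ s, HasDerivAt (fun s => (deriv (deriv A) s * Y s + deriv A s * (A s * Y s)) +
      (deriv A s * (A s * Y s) + A s * (deriv A s * Y s + A s * (A s * Y s))))
      (((deriv (deriv (deriv A)) s * Y s + deriv (deriv A) s * (A s * Y s)) +
        (deriv (deriv A) s * (A s * Y s) + deriv A s * (deriv A s * Y s + A s * (A s * Y s)))) +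
       ((deriv (deriv A) s * (A s * Y s) + deriv A s * (deriv A s * Y s + A s * (A s * Y s))) +
        (deriv A s * (deriv A s * Y s + A s * (A s * Y s)) +
          A s * ((deriv (deriv A) s * Y s + deriv A s * (A s * Y s)) +
            (deriv A s * (A s * Y s) + A s * (deriv A s * Y s + A s * (A s * Y s))))))) s :=
    fun s => (((hdA2 s).mul (hY s)).add ((hdA1 s).mul (hdY1 s))).add
      ((((hdA1 s).mul (hdY1 s))).add ((hdA s).mul (hdY2 s)))
  have hTY := E5_of_smooth hY8 hY hdY1 hdY2 hdY3
  have hYclean : E5 Y 1 (A 0) ((2⁻¹:ℝ) • deriv A 0 + (2⁻¹:ℝ) • (A 0 * A 0)) ((6⁻¹:ℝ) • deriv (deriv A) 0 + (6⁻¹:ℝ) • (A 0 * deriv A 0) + (3⁻¹:ℝ) • (deriv A 0 * A 0) + (6⁻¹:ℝ) • (A 0 * (A 0 * A 0))) ((24⁻¹:ℝ) • deriv (deriv (deriv A)) 0 + (24⁻¹:ℝ) • (A 0 * deriv (deriv A) 0) + (8⁻¹:ℝ) • (deriv (deriv A) 0 * A 0) + (8⁻¹:ℝ) • (deriv A 0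 * deriv A 0) + (24⁻¹:ℝ) • (A 0 * (A 0 * deriv A 0)) + (12⁻¹:ℝ) • (A 0 * (deriv A 0 * A 0)) + (8⁻¹:ℝ) • (deriv A 0 * (A 0 * A 0)) + (24⁻¹:ℝ) • (A 0 * (A 0 * (A 0 * A 0)))) := by
    refine E5.congr_coeff hTY ?_ ?_ ?_ ?_ ?_ <;>
    · simp only [hY0, mul_one, one_mul, mul_assoc, smul_add, smul_smul, mul_add, add_mul,
        smul_mul_assoc, mul_smul_comm]
      try (match_scalars <;> try ring)
  have hfinal := hYclean.out.sub hexpE5.out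
  simpa [sub_sub_sub_cancel_right] using hfinal
end

section
/- Let A : ℝ × Matrix (Fin n) (Fin n) ℝ → Matrix (Fin n) (Fin n) ℝ be infinitely differentiable (ContDiff ℝ ⊤ on the product), let Y₀ be an n×n real matrix, and let Y : ℝ → Matrix (Fin n) (Fin n) ℝ satisfy Y(0) = Y₀ and HasDerivAt Y (A(t, Y(t)) * Y(t)) t for all t. Define Ω¹(t) := ∫_{s∈[0,t]} A(s, Y₀) ds and Ω²(t) := ∫_{s∈[0,t]} A(s, exp(Ω¹(s)) * Y₀) ds. Then the function t ↦ Y(t) − exp(Ω²(t)) * Y₀ is O(|t|³) as t → 0 (IsBigO at the filter 𝓝 0); i.e., the second iterate of the explicit nonlinear Magnus expansion approximates the solution of Y' = A(t,Y)Y, Y(0) = Y₀ with local error of order t³. -/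
open scoped Matrix.Norms.L2Operator
open scoped ContDiff
open Asymptotics

open scoped ContDiff
open Asymptotics

lemma magnus_key_step {E : Type*} [NormedAddCommGroup E] [NormedSpace ℝ E] [CompleteSpace E]
    {f f' : ℝ → E} {k : ℕ} (hd : ∀ t, HasDerivAt f (f' t) t) (hc : Continuous f')
    (h0 : f 0 = 0) (hO : f' =O[nhds 0] fun t => |t| ^ k) :
    f =O[nhds 0] fun t => |t| ^ (k + 1) := by
  obtain ⟨C, hC⟩ := hO.bound
  rw [Metric.eventually_nhds_iff] at hC
  obtain ⟨ε, hε, hball⟩ := hC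
  rw [isBigO_iff]
  refine ⟨|C|, Metric.eventually_nhds_iff.2 ⟨ε, hε, fun {t} ht => ?_⟩⟩
  have hft : f t = ∫ s in (0:ℝ)..t, f' s := by
    rw [intervalIntegral.integral_eq_sub_of_hasDerivAt (fun s _ => hd s)
      (hc.intervalIntegrable _ _), h0, sub_zero]
  have habs : ∀ s ∈ Set.uIoc (0:ℝ) t, |s| ≤ |t| := by
    intro s hs
    rcases hs with ⟨h1, h2⟩
    refine abs_le.2 ⟨?_, le_trans h2 (max_le (abs_nonneg t) (le_abs_self t))⟩
    exact le_of_lt (lt_of_le_of_lt (le_min (neg_nonpos.2 (abs_nonneg t)) (neg_abs_le t)) h1)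
  have hbd : ∀ s ∈ Set.uIoc (0:ℝ) t, ‖f' s‖ ≤ |C| * |t| ^ k := by
    intro s hs
    have hdist : dist s 0 < ε := by
      rw [Real.dist_eq, sub_zero]
      exact lt_of_le_of_lt (habs s hs) (by simpa [Real.dist_eq] using ht)
    calc ‖f' s‖ ≤ C * ‖|s| ^ k‖ := hball hdist
      _ ≤ |C| * |s| ^ k := by
          rw [norm_pow, Real.norm_eq_abs, abs_abs]
          exact mul_le_mul_of_nonneg_right (le_abs_self C) (pow_nonneg (abs_nonneg s) k)
      _ ≤ |C| * |t| ^ k := by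
          exact mul_le_mul_of_nonneg_left (pow_le_pow_left₀ (abs_nonneg s) (habs s hs) k)
            (abs_nonneg C)
  calc ‖f t‖ = ‖∫ s in (0:ℝ)..t, f' s‖ := by rw [hft]
    _ ≤ |C| * |t| ^ k * |t - 0| := intervalIntegral.norm_integral_le_of_norm_le_const hbd
    _ = |C| * |t| ^ (k + 1) := by rw [sub_zero, pow_succ, mul_assoc]
    _ ≤ |C| * ‖|t| ^ (k + 1)‖ := by rw [Real.norm_eq_abs, abs_pow, abs_abs]

lemma magnus_smooth_of_deriv {E : Type*} [NormedAddCommGroup E] [NormedSpace ℝ E]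
    {f g : ℝ → E} (hd : ∀ t, HasDerivAt f (g t) t) (hg : ContDiff ℝ ∞ g) :
    ContDiff ℝ ∞ f := by
  refine contDiff_infty_iff_deriv.2 ⟨fun t => (hd t).differentiableAt, ?_⟩
  have h : deriv f = g := funext fun t => (hd t).deriv
  rw [h]; exact hg

lemma magnus_vanish3 {E : Type*} [NormedAddCommGroup E] [NormedSpace ℝ E] [CompleteSpace E]
    {f : ℝ → E} (hf : ContDiff ℝ ∞ f) (h0 : f 0 = 0) (h1 : deriv f 0 = 0)
    (h2 : deriv (deriv f) 0 = 0) : f =O[nhds 0] fun t => |t| ^ 3 := by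
  obtain ⟨hd, hf1⟩ := contDiff_infty_iff_deriv.1 hf
  obtain ⟨hd1, hf2⟩ := contDiff_infty_iff_deriv.1 hf1
  obtain ⟨hd2, hf3⟩ := contDiff_infty_iff_deriv.1 hf2
  have h2O : deriv (deriv f) =O[nhds 0] fun t => |t| ^ 1 := by
    have h := ((hd2 0).hasFDerivAt).isBigO_sub
    have h' : deriv (deriv f) =O[nhds 0] fun t => t - 0 := by
      refine h.congr' ?_ (Filter.EventuallyEq.refl _ _)
      filter_upwards with t
      simp [h2]
    refine h'.trans ?_
    rw [isBigO_iff]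
    exact ⟨1, Filter.Eventually.of_forall fun t => by simp⟩
  have h1O : deriv f =O[nhds 0] fun t => |t| ^ 2 :=
    magnus_key_step (fun t => (hd1 t).hasDerivAt) hf2.continuous h1 h2O
  have h0O := magnus_key_step (fun t => (hd t).hasDerivAt) hf1.continuous h0 h1O
  exact h0O


/-- The second iterate of the explicit nonlinear Magnus expansion,
`Ω²(t) = ∫₀ᵗ A(s, exp(Ω¹(s)) Y₀) ds` with `Ω¹(t) = ∫₀ᵗ A(s, Y₀) ds`, approximates the
solution of `Y' = A(t, Y) Y`, `Y(0) = Y₀` with local error `O(|t|³)` as `t → 0`. -/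
theorem nonlinear_magnus_second_iterate {n : ℕ}
    (A : ℝ × Matrix (Fin n) (Fin n) ℝ → Matrix (Fin n) (Fin n) ℝ)
    (hA : ContDiff ℝ (⊤ : ℕ∞) A) (Y₀ : Matrix (Fin n) (Fin n) ℝ)
    (Y : ℝ → Matrix (Fin n) (Fin n) ℝ) (hY0 : Y 0 = Y₀)
    (hY : ∀ t, HasDerivAt Y (A (t, Y t) * Y t) t) :
    Asymptotics.IsBigO (nhds (0:ℝ))
      (fun t : ℝ => Y t -
        NormedSpace.exp
            (∫ s in (0:ℝ)..t,
              A (s, NormedSpace.exp (∫ u in (0:ℝ)..s, A (u, Y₀)) * Y₀)) * Y₀)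
      (fun t : ℝ => |t| ^ 3) := by
  have hA' : ContDiff ℝ ∞ A := hA.of_le (by simp)
  have hAc : Continuous A := hA'.continuous
  -- first Magnus iterate
  set Ω₁ : ℝ → Matrix (Fin n) (Fin n) ℝ := fun t => ∫ s in (0:ℝ)..t, A (s, Y₀) with hΩ₁def
  have hΩ₁d : ∀ t, HasDerivAt Ω₁ (A (t, Y₀)) t := fun t =>
    ((hAc.comp (continuous_id.prodMk continuous_const)).integral_hasStrictDerivAt 0 t).hasDerivAt
  have hΩ₁s : ContDiff ℝ ∞ Ω₁ :=
    magnus_smooth_of_deriv hΩ₁d (hA'.comp (contDiff_id.prodMk contDiff_const))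
  have hΩ₁0 : Ω₁ 0 = 0 := intervalIntegral.integral_same
  -- exp is smooth
  have hexps : ContDiff ℝ ∞ (NormedSpace.exp : Matrix (Fin n) (Fin n) ℝ → Matrix (Fin n) (Fin n) ℝ) :=
    AnalyticOnNhd.contDiff (fun x _ => NormedSpace.exp_analytic x)
  -- the integrand of the second iterate
  set B : ℝ → Matrix (Fin n) (Fin n) ℝ := fun t => A (t, NormedSpace.exp (Ω₁ t) * Y₀) with hBdef
  have hBs : ContDiff ℝ ∞ B :=
    hA'.comp (contDiff_id.prodMk ((hexps.comp hΩ₁s).mul contDiff_const))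
  have hB0 : B 0 = A (0, Y₀) := by
    simp only [hBdef, hΩ₁0, NormedSpace.exp_zero, one_mul]
  -- second Magnus iterate
  set Ω : ℝ → Matrix (Fin n) (Fin n) ℝ := fun t => ∫ s in (0:ℝ)..t, B s with hΩdef
  have hΩd : ∀ t, HasDerivAt Ω (B t) t := fun t =>
    (hBs.continuous.integral_hasStrictDerivAt 0 t).hasDerivAt
  have hΩs : ContDiff ℝ ∞ Ω := magnus_smooth_of_deriv hΩd hBs
  have hΩ0 : Ω 0 = 0 := intervalIntegral.integral_same
  -- smoothness of Y by bootstrapping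
  have hYs : ContDiff ℝ ∞ Y := by
    rw [contDiff_infty]
    intro m
    induction m with
    | zero => exact contDiff_zero.2 (continuous_iff_continuousAt.2 fun t => (hY t).continuousAt)
    | succ m ih =>
      rw [show ((m + 1 : ℕ) : WithTop ℕ∞) = (m : WithTop ℕ∞) + 1 by push_cast; ring,
        contDiff_succ_iff_deriv]
      refine ⟨fun t => (hY t).differentiableAt, fun h => absurd h ?_, ?_⟩
      · exact_mod_cast WithTop.natCast_ne_top m
      · have hder : deriv Y = fun t => A (t, Y t) * Y t := funext fun t => (hY t).deriv
        rw [hder]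
        exact ((hA.of_le (by exact_mod_cast le_top)).comp (contDiff_id.prodMk ih)).mul ih
  -- abbreviations for values at 0
  set a : Matrix (Fin n) (Fin n) ℝ := A (0, Y₀) with hadef
  set L := fderiv ℝ A (0, Y₀) with hLdef
  set v : Matrix (Fin n) (Fin n) ℝ := a * Y₀ with hvdef
  -- the quadratic Taylor approximant
  set φ : ℝ → Matrix (Fin n) (Fin n) ℝ :=
    fun t => Y t - (Y₀ + Ω t * Y₀ + (2:ℝ)⁻¹ • (Ω t * Ω t * Y₀)) with hφdef
  have hφs : ContDiff ℝ ∞ φ :=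
    hYs.sub ((contDiff_const.add (hΩs.mul contDiff_const)).add
      (((hΩs.mul hΩs).mul contDiff_const).const_smul ((2:ℝ)⁻¹)))
  -- first derivative of φ
  set φ1 : ℝ → Matrix (Fin n) (Fin n) ℝ := fun t =>
    A (t, Y t) * Y t - (B t * Y₀ + (2:ℝ)⁻¹ • ((B t * Ω t + Ω t * B t) * Y₀)) with hφ1def
  have hφ1d : ∀ t, HasDerivAt φ (φ1 t) t := by
    intro t
    have h := (hY t).sub (((hasDerivAt_const t Y₀).add ((hΩd t).mul_const Y₀)).add
      ((((hΩd t).mul (hΩd t)).mul_const Y₀).const_smul ((2:ℝ)⁻¹)))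
    rw [zero_add] at h
    exact h
  have hφ0 : φ 0 = 0 := by
    simp [hφdef, hY0, hΩ0]
  have hφ10 : φ1 0 = 0 := by
    simp [hφ1def, hY0, hΩ0, hB0, hadef]
  have hderφ : deriv φ = φ1 := funext fun t => (hφ1d t).deriv
  -- derivative of φ1 at 0
  have hAfd : HasFDerivAt A L (0, Y 0) := by
    rw [hY0]; exact (hA.differentiable (by simp) (0, Y₀)).hasFDerivAt
  have hYd0 : HasDerivAt Y v 0 := by
    have : A (0, Y 0) * Y 0 = v := by rw [hY0]
    exact this ▸ hY 0
  have hpair : HasDerivAt (fun t => (t, Y t)) ((1:ℝ), v) 0 := (hasDerivAt_id 0).prodMk hYd0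
  have hAY : HasDerivAt (fun t => A (t, Y t)) (L (1, v)) 0 := hAfd.comp_hasDerivAt 0 hpair
  have hψ : HasDerivAt (fun t => A (t, Y t) * Y t) (L (1, v) * Y₀ + a * v) 0 := by
    have h := hAY.mul hYd0
    rw [hY0] at h
    exact h
  -- derivative of B at 0
  have hexpfd : HasFDerivAt (NormedSpace.exp)
      (1 : Matrix (Fin n) (Fin n) ℝ →L[ℝ] Matrix (Fin n) (Fin n) ℝ) (Ω₁ 0) := by
    rw [hΩ₁0]; exact hasFDerivAt_exp_zero
  have hexpd : HasDerivAt (fun t => NormedSpace.exp (Ω₁ t)) a 0 := by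
    have h := hexpfd.comp_hasDerivAt 0 (hΩ₁d 0)
    simp only [ContinuousLinearMap.one_apply] at h; exact h
  have hEB : HasDerivAt (fun t => NormedSpace.exp (Ω₁ t) * Y₀) v 0 := hexpd.mul_const Y₀
  have hBfd : HasFDerivAt A L (0, NormedSpace.exp (Ω₁ 0) * Y₀) := by
    rw [hΩ₁0, NormedSpace.exp_zero, one_mul]
    exact (hA.differentiable (by simp) (0, Y₀)).hasFDerivAt
  have hBd : HasDerivAt B (L (1, v)) 0 :=
    hBfd.comp_hasDerivAt 0 ((hasDerivAt_id 0).prodMk hEB)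
  -- the derivative of φ1 at 0 vanishes
  have hφ1d0 : HasDerivAt φ1 0 0 := by
    have h := hψ.sub ((hBd.mul_const Y₀).add
      ((((hBd.mul (hΩd 0)).add ((hΩd 0).mul hBd)).mul_const Y₀).const_smul ((2:ℝ)⁻¹)))
    have hval : L (1, v) * Y₀ + a * v -
        (L (1, v) * Y₀ + (2:ℝ)⁻¹ • ((L (1, v) * Ω 0 + B 0 * B 0 +
          (B 0 * B 0 + Ω 0 * L (1, v))) * Y₀)) = 0 := by
      simp only [hΩ0, hB0, mul_zero, zero_mul, add_zero, zero_add]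
      have h2 : (2:ℝ)⁻¹ • ((a * a + a * a) * Y₀) = a * v := by
        rw [add_mul, ← two_smul ℝ ((a * a) * Y₀), smul_smul, hvdef, mul_assoc]
        norm_num
      rw [h2]
      abel
    rw [← hval]
    exact h
  have hdd : deriv (deriv φ) 0 = 0 := by
    rw [hderφ, hφ1d0.deriv]
  have hd1 : deriv φ 0 = 0 := by rw [hderφ]; exact hφ10
  -- φ is O(|t|³)
  have hφO : φ =O[nhds 0] fun t => |t| ^ 3 := magnus_vanish3 hφs hφ0 hd1 hdd
  -- the exponential remainder
  have hP : ∀ y : Matrix (Fin n) (Fin n) ℝ,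
      (NormedSpace.expSeries ℝ (Matrix (Fin n) (Fin n) ℝ)).partialSum 3 y
        = 1 + y + (2:ℝ)⁻¹ • (y * y) := by
    intro y
    simp [FormalMultilinearSeries.partialSum, Finset.sum_range_succ,
      NormedSpace.expSeries_apply_eq, Nat.factorial, sq]
  have hrem : (fun y : Matrix (Fin n) (Fin n) ℝ =>
      NormedSpace.exp y - (1 + y + (2:ℝ)⁻¹ • (y * y))) =O[nhds 0] fun y => ‖y‖ ^ 3 := by
    have h := (NormedSpace.exp_hasFPowerSeriesAt_zero
      (𝕂 := ℝ) (𝔸 := Matrix (Fin n) (Fin n) ℝ)).isBigO_sub_partialSum_pow 3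
    simp only [zero_add, hP] at h
    exact h
  have hΩtend : Filter.Tendsto Ω (nhds 0) (nhds 0) := by
    have := hΩs.continuous.tendsto 0
    rwa [hΩ0] at this
  have hcomp : (fun t => NormedSpace.exp (Ω t) - (1 + Ω t + (2:ℝ)⁻¹ • (Ω t * Ω t)))
      =O[nhds 0] fun t => ‖Ω t‖ ^ 3 := hrem.comp_tendsto hΩtend
  -- ‖Ω t‖³ = O(|t|³)
  have hΩO : (fun t => Ω t) =O[nhds 0] fun t : ℝ => t := by
    have h := (hΩd 0).hasFDerivAt.isBigO_sub
    simpa [hΩ0] using h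
  have hΩnorm : (fun t => ‖Ω t‖ ^ 3) =O[nhds 0] fun t : ℝ => |t| ^ 3 := by
    have h1 : (fun t => ‖Ω t‖) =O[nhds 0] fun t : ℝ => t := hΩO.norm_left
    have h2 := h1.pow 3
    refine h2.trans ?_
    rw [isBigO_iff]
    exact ⟨1, Filter.Eventually.of_forall fun t => by simp [abs_pow]⟩
  have hremO : (fun t => (NormedSpace.exp (Ω t) - (1 + Ω t + (2:ℝ)⁻¹ • (Ω t * Ω t))) * Y₀)
      =O[nhds 0] fun t : ℝ => |t| ^ 3 := by
    refine IsBigO.trans ?_ (hcomp.trans hΩnorm)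
    rw [isBigO_iff]
    refine ⟨‖Y₀‖, Filter.Eventually.of_forall fun t => ?_⟩
    calc ‖(NormedSpace.exp (Ω t) - (1 + Ω t + (2:ℝ)⁻¹ • (Ω t * Ω t))) * Y₀‖
        ≤ ‖NormedSpace.exp (Ω t) - (1 + Ω t + (2:ℝ)⁻¹ • (Ω t * Ω t))‖ * ‖Y₀‖ := norm_mul_le _ _
      _ = ‖Y₀‖ * ‖NormedSpace.exp (Ω t) - (1 + Ω t + (2:ℝ)⁻¹ • (Ω t * Ω t))‖ := mul_comm _ _
  -- assemble
  have hfun : (fun t : ℝ => Y t - NormedSpace.exp (Ω t) * Y₀)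
      = fun t => φ t - (NormedSpace.exp (Ω t) - (1 + Ω t + (2:ℝ)⁻¹ • (Ω t * Ω t))) * Y₀ := by
    funext t
    rw [hφdef]
    simp only [sub_mul, add_mul, one_mul, smul_mul_assoc]
    abel
  have hmain : (fun t : ℝ => Y t - NormedSpace.exp (Ω t) * Y₀) =O[nhds 0]
      fun t : ℝ => |t| ^ 3 := by
    rw [hfun]
    exact hφO.sub hremO
  exact hmain
end
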